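/- arXiv:2205.11488 — 7 statements merged into one kernel-verified Lean document; each statement's English description precedes it below -/
import Mathlib

section
/- Let G be a graph, let r = {A,B} and s = {C,D} be two crossing separations of G, and let c = {A∩C, B∪D} and d = {B∩D, A∪C} be opposite corners. If a separation t of G crosses both c and d, then t crosses both r and s. -/
open Set

variable {V : Type*}

/-- A separation, represented as an ordered pair of sides (standing for the
unordered pair `{A, B}`). -/
abbrev GSep (V : Type*) := Set V × Set V

/-- The order of a separation: the size of its separator `A ∩ B`. -/
noncomputable def sOrd (s : GSep V) : ℕ := (s.1 ∩ s.2).ncard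

/-- `(A, B)` is a separation of `G`: the sides cover `V (G)` and there is no
edge between `A \ B` and `B \ A`. -/
def IsSep (G : SimpleGraph V) (s : GSep V) : Prop :=
  s.1 ∪ s.2 = Set.univ ∧ ∀ a ∈ s.1 \ s.2, ∀ b ∈ s.2 \ s.1, ¬ G.Adj a b

/-- A separation is proper if both `A \ B` and `B \ A` are nonempty. -/
def IsProper (s : GSep V) : Prop := (s.1 \ s.2).Nonempty ∧ (s.2 \ s.1).Nonempty

/-- Two separations are nested if, after possibly renaming their sides,
`A ⊆ C` and `B ⊇ D`. -/
def Nested (s t : GSep V) : Prop :=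
  (s.1 ⊆ t.1 ∧ t.2 ⊆ s.2) ∨ (s.1 ⊆ t.2 ∧ t.1 ⊆ s.2) ∨
  (s.2 ⊆ t.1 ∧ t.2 ⊆ s.1) ∨ (s.2 ⊆ t.2 ∧ t.1 ⊆ s.1)

/-- Two separations cross if they are not nested. -/
def Crosses (s t : GSep V) : Prop := ¬ Nested s t

/-- The corner `(A ∩ C, B ∪ D)` of two (crossing) separations `(A,B)`, `(C,D)`.
The four corners of `s, t` are `corner s t`, `corner s t.swap`,
`corner s.swap t` and `corner s.swap t.swap`; two corners are opposite if both
side choices are opposite, and two distinct corners lie on the same side of `s`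
if they use the same side of `s`. -/
def corner (s t : GSep V) : GSep V := (s.1 ∩ t.1, s.2 ∪ t.2)

/-- An entanglement in `G`: a nonempty set of proper separations of `G`
(closed under swapping sides, i.e. a set of unordered separations) such that
whenever `s ∈ ε` is crossed by a separation `t` of `G` so that the two corners
lying on the same side of `s` have order at most `sOrd s`, at least one of
these corners has order exactly `sOrd s` and lies in `ε`. -/
def IsEntanglement (G : SimpleGraph V) (ε : Set (GSep V)) : Prop :=
  ε.Nonempty ∧
  (∀ s ∈ ε, IsSep G s ∧ IsProper s) ∧
  (∀ s ∈ ε, Prod.swap s ∈ ε) ∧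
  ∀ s ∈ ε, ∀ t : GSep V, IsSep G t → Crosses s t →
    sOrd (corner s t) ≤ sOrd s → sOrd (corner s (Prod.swap t)) ≤ sOrd s →
    (sOrd (corner s t) = sOrd s ∧ corner s t ∈ ε) ∨
    (sOrd (corner s (Prod.swap t)) = sOrd s ∧ corner s (Prod.swap t) ∈ ε)

/-- The separations of `G` lying in some entanglement. -/
def EntSeps (G : SimpleGraph V) : Set (GSep V) :=
  {t | ∃ ε, IsEntanglement G ε ∧ t ∈ ε}

/-- The crossing number of `s`: the number of separations lying in
entanglements in `G` which are crossed by `s`. -/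
noncomputable def xnum (G : SimpleGraph V) (s : GSep V) : ℕ :=
  {t ∈ EntSeps G | Crosses s t}.ncard

/-- A separation in an entanglement `ε` is friendly if no other separation in
`ε` crosses fewer separations in entanglements in `G`. -/
def Friendly (G : SimpleGraph V) (s : GSep V) : Prop :=
  ∃ ε, IsEntanglement G ε ∧ s ∈ ε ∧ ∀ t ∈ ε, xnum G s ≤ xnum G t


/-- (F2) If a separation `u` crosses both of two opposite corners of crossing
separations `r, s`, then `u` crosses both `r` and `s`. -/
theorem stmt_3 {V : Type*} (G : SimpleGraph V) (r s u : GSep V)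
    (hr : IsSep G r) (hs : IsSep G s) (hu : IsSep G u) (hcross : Crosses r s)
    (hc : Crosses u (corner r s))
    (hd : Crosses u (corner (Prod.swap r) (Prod.swap s))) :
    Crosses u r ∧ Crosses u s := by
  simp only [Crosses, Nested, corner, Prod.swap] at *
  constructor
  · rintro (⟨h1, h2⟩ | ⟨h1, h2⟩ | ⟨h1, h2⟩ | ⟨h1, h2⟩)
    · exact hd (Or.inr (Or.inl ⟨h1.trans Set.subset_union_left,
        Set.inter_subset_left.trans h2⟩))
    · exact hc (Or.inr (Or.inl ⟨h1.trans Set.subset_union_left,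
        Set.inter_subset_left.trans h2⟩))
    · exact hd (Or.inr (Or.inr (Or.inr ⟨h1.trans Set.subset_union_left,
        Set.inter_subset_left.trans h2⟩)))
    · exact hc (Or.inr (Or.inr (Or.inr ⟨h1.trans Set.subset_union_left,
        Set.inter_subset_left.trans h2⟩)))
  · rintro (⟨h1, h2⟩ | ⟨h1, h2⟩ | ⟨h1, h2⟩ | ⟨h1, h2⟩)
    · exact hd (Or.inr (Or.inl ⟨h1.trans Set.subset_union_right,
        Set.inter_subset_right.trans h2⟩))
    · exact hc (Or.inr (Or.inl ⟨h1.trans Set.subset_union_right,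
        Set.inter_subset_right.trans h2⟩))
    · exact hd (Or.inr (Or.inr (Or.inr ⟨h1.trans Set.subset_union_right,
        Set.inter_subset_right.trans h2⟩)))
    · exact hc (Or.inr (Or.inr (Or.inr ⟨h1.trans Set.subset_union_right,
        Set.inter_subset_right.trans h2⟩)))
end

section
/- Let G be a finite graph, for a separation s define the crossing number x(s) to be the number of separations lying in entanglements in G which cross s. Let r and s be two crossing separations each lying in some entanglement in G, and let c, d be two opposite corners of r, s that are separations of G. Then x(c) + x(d) < x(r) + x(s). -/
open Set

variable {V : Type*}

lemma nested_corner_of_nested_left (h : Nested r t) :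
    Nested (corner r s) t ∨ Nested (corner (Prod.swap r) (Prod.swap s)) t := by
  simp only [Nested, corner, Prod.fst_swap, Prod.snd_swap] at *
  rcases h with ⟨h1,h2⟩|⟨h1,h2⟩|⟨h1,h2⟩|⟨h1,h2⟩
  · exact Or.inl (Or.inl ⟨Set.inter_subset_left.trans h1, h2.trans Set.subset_union_left⟩)
  · exact Or.inl (Or.inr (Or.inl ⟨Set.inter_subset_left.trans h1, h2.trans Set.subset_union_left⟩))
  · exact Or.inr (Or.inl ⟨Set.inter_subset_left.trans h1, h2.trans Set.subset_union_left⟩)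
  · exact Or.inr (Or.inr (Or.inl ⟨Set.inter_subset_left.trans h1, h2.trans Set.subset_union_left⟩))

lemma nested_corner_of_nested_right (h : Nested s t) :
    Nested (corner r s) t ∨ Nested (corner (Prod.swap r) (Prod.swap s)) t := by
  simp only [Nested, corner, Prod.fst_swap, Prod.snd_swap] at *
  rcases h with ⟨h1,h2⟩|⟨h1,h2⟩|⟨h1,h2⟩|⟨h1,h2⟩
  · exact Or.inl (Or.inl ⟨Set.inter_subset_right.trans h1, h2.trans Set.subset_union_right⟩)
  · exact Or.inl (Or.inr (Or.inl ⟨Set.inter_subset_right.trans h1, h2.trans Set.subset_union_right⟩))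
  · exact Or.inr (Or.inl ⟨Set.inter_subset_right.trans h1, h2.trans Set.subset_union_right⟩)
  · exact Or.inr (Or.inr (Or.inl ⟨Set.inter_subset_right.trans h1, h2.trans Set.subset_union_right⟩))

lemma nested_both_corners (hns : ¬ Nested r s) (hrt : Nested r t) (hst : Nested s t) :
    Nested (corner r s) t ∧ Nested (corner (Prod.swap r) (Prod.swap s)) t := by
  simp only [Nested, corner, Prod.fst_swap, Prod.snd_swap] at *
  rcases hrt with ⟨h1,h2⟩|⟨h1,h2⟩|⟨h1,h2⟩|⟨h1,h2⟩ <;>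
    rcases hst with ⟨h3,h4⟩|⟨h3,h4⟩|⟨h3,h4⟩|⟨h3,h4⟩
  · exact ⟨Or.inl ⟨Set.inter_subset_left.trans h1, h2.trans Set.subset_union_left⟩, Or.inr (Or.inr (Or.inl ⟨Set.union_subset h1 h3, Set.subset_inter h2 h4⟩))⟩
  · exact absurd (Or.inr (Or.inl ⟨h1.trans h4, h3.trans h2⟩)) hns
  · exact ⟨Or.inl ⟨Set.inter_subset_left.trans h1, h2.trans Set.subset_union_left⟩, Or.inl ⟨Set.inter_subset_right.trans h3, h4.trans Set.subset_union_right⟩⟩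
  · exact absurd (Or.inl ⟨h1.trans h4, h3.trans h2⟩) hns
  · exact absurd (Or.inr (Or.inl ⟨h1.trans h4, h3.trans h2⟩)) hns
  · exact ⟨Or.inr (Or.inl ⟨Set.inter_subset_left.trans h1, h2.trans Set.subset_union_left⟩), Or.inr (Or.inr (Or.inr ⟨Set.union_subset h1 h3, Set.subset_inter h2 h4⟩))⟩
  · exact absurd (Or.inl ⟨h1.trans h4, h3.trans h2⟩) hns
  · exact ⟨Or.inr (Or.inl ⟨Set.inter_subset_left.trans h1, h2.trans Set.subset_union_left⟩), Or.inr (Or.inl ⟨Set.inter_subset_right.trans h3, h4.trans Set.subset_union_right⟩)⟩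
  · exact ⟨Or.inl ⟨Set.inter_subset_right.trans h3, h4.trans Set.subset_union_right⟩, Or.inl ⟨Set.inter_subset_left.trans h1, h2.trans Set.subset_union_left⟩⟩
  · exact absurd (Or.inr (Or.inr (Or.inr ⟨h1.trans h4, h3.trans h2⟩))) hns
  · exact ⟨Or.inr (Or.inr (Or.inl ⟨Set.union_subset h1 h3, Set.subset_inter h2 h4⟩)), Or.inl ⟨Set.inter_subset_left.trans h1, h2.trans Set.subset_union_left⟩⟩
  · exact absurd (Or.inr (Or.inr (Or.inl ⟨h1.trans h4, h3.trans h2⟩))) hns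
  · exact absurd (Or.inr (Or.inr (Or.inr ⟨h1.trans h4, h3.trans h2⟩))) hns
  · exact ⟨Or.inr (Or.inl ⟨Set.inter_subset_right.trans h3, h4.trans Set.subset_union_right⟩), Or.inr (Or.inl ⟨Set.inter_subset_left.trans h1, h2.trans Set.subset_union_left⟩)⟩
  · exact absurd (Or.inr (Or.inr (Or.inl ⟨h1.trans h4, h3.trans h2⟩))) hns
  · exact ⟨Or.inr (Or.inr (Or.inr ⟨Set.union_subset h1 h3, Set.subset_inter h2 h4⟩)), Or.inr (Or.inl ⟨Set.inter_subset_left.trans h1, h2.trans Set.subset_union_left⟩)⟩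

lemma nested_corner_self : Nested (corner r s) s ∧ Nested (corner (Prod.swap r) (Prod.swap s)) s := by
  simp only [Nested, corner, Prod.fst_swap, Prod.snd_swap]
  exact ⟨Or.inl ⟨Set.inter_subset_right, Set.subset_union_right⟩,
    Or.inr (Or.inl ⟨Set.inter_subset_right, Set.subset_union_right⟩)⟩

/-- For two crossing separations `r, s` lying in entanglements in a finite
graph and two opposite corners `c, d` of `r, s`, one has
`x(c) + x(d) < x(r) + x(s)`. -/
theorem stmt_5 {V : Type*} [Fintype V] (G : SimpleGraph V) (r s : GSep V)
    (hr : r ∈ EntSeps G) (hs : s ∈ EntSeps G) (hcross : Crosses r s) :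
    xnum G (corner r s) + xnum G (corner (Prod.swap r) (Prod.swap s)) <
      xnum G r + xnum G s := by
  classical
  have hfin : ∀ S : Set (GSep V), S.Finite := fun S => S.toFinite
  set Sc : Set (GSep V) := {t | t ∈ EntSeps G ∧ Crosses (corner r s) t} with hSc
  set Sd : Set (GSep V) :=
    {t | t ∈ EntSeps G ∧ Crosses (corner (Prod.swap r) (Prod.swap s)) t} with hSd
  set Sr : Set (GSep V) := {t | t ∈ EntSeps G ∧ Crosses r t} with hSr
  set Ss : Set (GSep V) := {t | t ∈ EntSeps G ∧ Crosses s t} with hSs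
  have hU : Sc ∪ Sd ⊆ Sr ∪ Ss := by
    rintro t ht
    have htT : t ∈ EntSeps G := by rcases ht with ⟨h, -⟩ | ⟨h, -⟩ <;> exact h
    have hor : Crosses (corner r s) t ∨ Crosses (corner (Prod.swap r) (Prod.swap s)) t := by
      rcases ht with ⟨-, h⟩ | ⟨-, h⟩
      · exact Or.inl h
      · exact Or.inr h
    by_contra hcon
    rw [Set.mem_union] at hcon
    push_neg at hcon
    obtain ⟨h1, h2⟩ := hcon
    have hn1 : Nested r t := by
      by_contra hn; exact h1 ⟨htT, hn⟩
    have hn2 : Nested s t := by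
      by_contra hn; exact h2 ⟨htT, hn⟩
    obtain ⟨hb1, hb2⟩ := nested_both_corners hcross hn1 hn2
    rcases hor with h | h
    · exact h hb1
    · exact h hb2
  have hI : Sc ∩ Sd ⊆ Sr ∩ Ss := by
    rintro t ⟨⟨htT, h1⟩, ⟨-, h2⟩⟩
    refine ⟨⟨htT, fun hn => ?_⟩, ⟨htT, fun hn => ?_⟩⟩
    · rcases nested_corner_of_nested_left (s := s) hn with h | h
      · exact h1 h
      · exact h2 h
    · rcases nested_corner_of_nested_right (r := r) hn with h | h
      · exact h1 h
      · exact h2 h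
  have hs_mem : s ∈ Sr ∪ Ss := Or.inl ⟨hs, hcross⟩
  have hs_not : s ∉ Sc ∪ Sd := by
    rintro (⟨-, h⟩ | ⟨-, h⟩)
    · exact h nested_corner_self.1
    · exact h nested_corner_self.2
  have hssub : Sc ∪ Sd ⊂ Sr ∪ Ss :=
    (Set.ssubset_iff_of_subset hU).2 ⟨s, hs_mem, hs_not⟩
  have h1 : (Sc ∪ Sd).ncard < (Sr ∪ Ss).ncard :=
    Set.ncard_lt_ncard hssub (hfin _)
  have h2 : (Sc ∩ Sd).ncard ≤ (Sr ∩ Ss).ncard :=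
    Set.ncard_le_ncard hI (hfin _)
  have e1 : (Sc ∪ Sd).ncard + (Sc ∩ Sd).ncard = Sc.ncard + Sd.ncard :=
    Set.ncard_union_add_ncard_inter Sc Sd (hfin _) (hfin _)
  have e2 : (Sr ∪ Ss).ncard + (Sr ∩ Ss).ncard = Sr.ncard + Ss.ncard :=
    Set.ncard_union_add_ncard_inter Sr Ss (hfin _) (hfin _)
  have ec : xnum G (corner r s) = Sc.ncard := rfl
  have ed : xnum G (corner (Prod.swap r) (Prod.swap s)) = Sd.ncard := rfl
  have er : xnum G r = Sr.ncard := rfl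
  have es : xnum G s = Ss.ncard := rfl
  rw [ec, ed, er, es]
  omega
end

section
/- Let G be a finite graph and suppose tangles do exist, i.e. let τ and τ' be two distinguishable tangles in G. Then the set ε of all separations of G which efficiently distinguish τ and τ' is an entanglement in G: it is a non-empty set of proper separations satisfying the entanglement axiom. -/
open Set

variable {V : Type*}

/-- A tangle of order `k` in `G`: an orientation of all separations of order
less than `k` — an element `(A, B) ∈ τ` is read as the orientation of `{A,B}`
with small side `A` (pointing towards `B`) — such that no separation is
oriented both ways, and no three small sides of oriented separations together
cover `G` (all vertices and all edges). -/
def IsTangle (G : SimpleGraph V) (k : ℕ) (τ : Set (GSep V)) : Prop :=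
  (∀ s ∈ τ, IsSep G s ∧ sOrd s < k) ∧
  (∀ s : GSep V, IsSep G s → sOrd s < k → s ∈ τ ∨ Prod.swap s ∈ τ) ∧
  (∀ s ∈ τ, Prod.swap s ∉ τ) ∧
  (∀ s₁ ∈ τ, ∀ s₂ ∈ τ, ∀ s₃ ∈ τ,
    ¬ (s₁.1 ∪ s₂.1 ∪ s₃.1 = Set.univ ∧
       ∀ v w, G.Adj v w →
         (v ∈ s₁.1 ∧ w ∈ s₁.1) ∨ (v ∈ s₂.1 ∧ w ∈ s₂.1) ∨ (v ∈ s₃.1 ∧ w ∈ s₃.1)))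

/-- A separation distinguishes two tangles if they orient it towards opposite
sides. -/
def Distinguishes (s : GSep V) (τ τ' : Set (GSep V)) : Prop :=
  (s ∈ τ ∧ Prod.swap s ∈ τ') ∨ (Prod.swap s ∈ τ ∧ s ∈ τ')

/-- A separation distinguishes two tangles efficiently if it does so and has
minimum order among all separations distinguishing them. -/
def EffDistinguishes (s : GSep V) (τ τ' : Set (GSep V)) : Prop :=
  Distinguishes s τ τ' ∧ ∀ t : GSep V, Distinguishes t τ τ' → sOrd s ≤ sOrd t



section Aux

variable {G : SimpleGraph V}

lemma sOrd_swap' (s : GSep V) : sOrd (Prod.swap s) = sOrd s := by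
  simp [sOrd, Set.inter_comm]

lemma isSep_swap' {s : GSep V} (h : IsSep G s) : IsSep G (Prod.swap s) := by
  refine ⟨by rw [show (Prod.swap s).1 ∪ (Prod.swap s).2 = s.2 ∪ s.1 from rfl,
    Set.union_comm]; exact h.1, ?_⟩
  intro a ha b hb hab
  exact h.2 b hb a ha hab.symm

lemma distinguishes_swap' {s : GSep V} {τ τ' : Set (GSep V)}
    (h : Distinguishes s τ τ') : Distinguishes (Prod.swap s) τ τ' := by
  rcases h with ⟨h1, h2⟩ | ⟨h1, h2⟩
  · exact Or.inr ⟨by simpa using h1, by simpa using h2⟩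
  · exact Or.inl ⟨by simpa using h1, by simpa using h2⟩

lemma cover_of_isSep {s : GSep V} (h : IsSep G s) {x : V} (hx : x ∉ s.1) :
    x ∈ s.2 := by
  have hm : x ∈ s.1 ∪ s.2 := by rw [h.1]; trivial
  rcases (Set.mem_union x s.1 s.2).mp hm with h' | h'
  exacts [absurd h' hx, h']

lemma cover_of_isSep' {s : GSep V} (h : IsSep G s) {x : V} (hx : x ∉ s.2) :
    x ∈ s.1 := by
  have hm : x ∈ s.1 ∪ s.2 := by rw [h.1]; trivial
  rcases (Set.mem_union x s.1 s.2).mp hm with h' | h'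
  exacts [h', absurd h' hx]

/-- Every edge of `G` lies within one side of a separation. -/
lemma edge_side {s : GSep V} (hp : IsSep G s) {v w : V} (hadj : G.Adj v w) :
    (v ∈ s.1 ∧ w ∈ s.1) ∨ (v ∈ s.2 ∧ w ∈ s.2) := by
  by_cases hv : v ∈ s.1 <;> by_cases hw : w ∈ s.1
  · exact Or.inl ⟨hv, hw⟩
  · have hw2 : w ∈ s.2 := cover_of_isSep hp hw
    by_cases hv2 : v ∈ s.2
    · exact Or.inr ⟨hv2, hw2⟩
    · exact absurd hadj (hp.2 v ⟨hv, hv2⟩ w ⟨hw2, hw⟩)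
  · have hv2 : v ∈ s.2 := cover_of_isSep hp hv
    by_cases hw2 : w ∈ s.2
    · exact Or.inr ⟨hv2, hw2⟩
    · exact absurd hadj.symm (hp.2 w ⟨hw, hw2⟩ v ⟨hv2, hv⟩)
  · exact Or.inr ⟨cover_of_isSep hp hv, cover_of_isSep hp hw⟩

lemma isSep_corner {s t : GSep V} (hs : IsSep G s) (ht : IsSep G t) :
    IsSep G (corner s t) := by
  constructor
  · apply Set.eq_univ_of_univ_subset
    intro v _
    by_cases hvs : v ∈ s.2
    · exact Or.inr (Or.inl hvs)
    · by_cases hvt : v ∈ t.2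
      · exact Or.inr (Or.inr hvt)
      · exact Or.inl ⟨cover_of_isSep' hs hvs, cover_of_isSep' ht hvt⟩
  · rintro a ⟨⟨ha1, ha2⟩, ha3⟩ b ⟨hb1, hb2⟩ hab
    have has2 : a ∉ s.2 := fun h => ha3 (Set.mem_union_left _ h)
    have hat2 : a ∉ t.2 := fun h => ha3 (Set.mem_union_right _ h)
    have hb2' : ¬ (b ∈ s.1 ∧ b ∈ t.1) := fun h => hb2 (Set.mem_inter h.1 h.2)
    rcases (Set.mem_union b s.2 t.2).mp hb1 with hb | hb
    · rcases Classical.em (b ∈ s.1) with h | h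
      · rcases Classical.em (b ∈ t.1) with h' | h'
        · exact (hb2' ⟨h, h'⟩).elim
        · have hbt : b ∈ t.2 := cover_of_isSep ht h'
          exact ht.2 a ⟨ha2, hat2⟩ b ⟨hbt, h'⟩ hab
      · exact hs.2 a ⟨ha1, has2⟩ b ⟨hb, h⟩ hab
    · rcases Classical.em (b ∈ t.1) with h | h
      · rcases Classical.em (b ∈ s.1) with h' | h'
        · exact (hb2' ⟨h', h⟩).elim
        · have hbs : b ∈ s.2 := cover_of_isSep hs h'
          exact hs.2 a ⟨ha1, has2⟩ b ⟨hbs, h'⟩ hab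
      · exact ht.2 a ⟨ha2, hat2⟩ b ⟨hb, h⟩ hab

lemma not_univ_mem {k : ℕ} {τ : Set (GSep V)} (h : IsTangle G k τ) (B : Set V) :
    ((Set.univ : Set V), B) ∉ τ := by
  intro hmem
  exact h.2.2.2 _ hmem _ hmem _ hmem
    ⟨by simp, fun v w _ => Or.inl ⟨trivial, trivial⟩⟩

lemma proper_of_dist {k k' : ℕ} {τ τ' : Set (GSep V)}
    (hτ : IsTangle G k τ) (hτ' : IsTangle G k' τ') {s : GSep V}
    (hcov : s.1 ∪ s.2 = Set.univ) (hd : Distinguishes s τ τ') : IsProper s := by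
  constructor
  · rcases Set.eq_empty_or_nonempty (s.1 \ s.2) with he | h
    · exfalso
      have hsub : s.1 ⊆ s.2 := Set.diff_eq_empty.mp he
      have hB : s.2 = Set.univ := by
        rw [← hcov, Set.union_eq_self_of_subset_left hsub]
      have h1 : Prod.swap s ∉ τ := by
        rw [show Prod.swap s = (s.2, s.1) from rfl, hB]
        exact not_univ_mem hτ s.1
      have h2 : Prod.swap s ∉ τ' := by
        rw [show Prod.swap s = (s.2, s.1) from rfl, hB]
        exact not_univ_mem hτ' s.1
      rcases hd with ⟨_, hc⟩ | ⟨hc, _⟩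
      exacts [h2 hc, h1 hc]
    · exact h
  · rcases Set.eq_empty_or_nonempty (s.2 \ s.1) with he | h
    · exfalso
      have hsub : s.2 ⊆ s.1 := Set.diff_eq_empty.mp he
      have hA : s.1 = Set.univ := by
        rw [← hcov, Set.union_eq_self_of_subset_right hsub]
      have h1 : s ∉ τ := by
        rw [show s = (s.1, s.2) from rfl, hA]
        exact not_univ_mem hτ s.2
      have h2 : s ∉ τ' := by
        rw [show s = (s.1, s.2) from rfl, hA]
        exact not_univ_mem hτ' s.2
      rcases hd with ⟨hc, _⟩ | ⟨_, hc⟩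
      exacts [h1 hc, h2 hc]
    · exact h

lemma corner_mem_tangle {k : ℕ} {τ : Set (GSep V)} (hτ : IsTangle G k τ)
    {s t : GSep V} (hs : s ∈ τ) (ht : IsSep G t)
    (hord : sOrd (corner s t) < k) : corner s t ∈ τ := by
  have hsepS := (hτ.1 s hs).1
  have hsep := isSep_corner hsepS ht
  rcases hτ.2.1 _ hsep hord with h | h
  · exact h
  · exfalso
    apply hτ.2.2.2 s hs _ h _ h
    constructor
    · apply Set.eq_univ_of_univ_subset
      intro v _
      by_cases hv : v ∈ s.1
      · exact Or.inl (Or.inl hv)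
      · exact Or.inl (Or.inr (Or.inl (cover_of_isSep hsepS hv)))
    · intro v w hadj
      rcases edge_side hsepS hadj with ⟨hv, hw⟩ | ⟨hv, hw⟩
      · exact Or.inl ⟨hv, hw⟩
      · exact Or.inr (Or.inl ⟨Or.inl hv, Or.inl hw⟩)

lemma not_both_corners {k' : ℕ} {τ' : Set (GSep V)} (hτ' : IsTangle G k' τ')
    {s t : GSep V} (hsepS : IsSep G s) (hsepT : IsSep G t)
    (hss : Prod.swap s ∈ τ') (h1 : corner s t ∈ τ')
    (h2 : corner s (Prod.swap t) ∈ τ') : False := by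
  apply hτ'.2.2.2 _ hss _ h1 _ h2
  constructor
  · apply Set.eq_univ_of_univ_subset
    intro v _
    by_cases hv : v ∈ s.2
    · exact Or.inl (Or.inl hv)
    · have hv1 : v ∈ s.1 := cover_of_isSep' hsepS hv
      by_cases hvt : v ∈ t.1
      · exact Or.inl (Or.inr ⟨hv1, hvt⟩)
      · exact Or.inr ⟨hv1, cover_of_isSep hsepT hvt⟩
  · intro v w hadj
    rcases edge_side hsepS hadj with ⟨hv, hw⟩ | ⟨hv, hw⟩
    · rcases edge_side hsepT hadj with ⟨hv', hw'⟩ | ⟨hv', hw'⟩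
      · exact Or.inr (Or.inl ⟨⟨hv, hv'⟩, ⟨hw, hw'⟩⟩)
      · exact Or.inr (Or.inr ⟨⟨hv, hv'⟩, ⟨hw, hw'⟩⟩)
    · exact Or.inl ⟨hv, hw⟩

lemma main_case {k k' : ℕ} {τ τ' : Set (GSep V)}
    (hτ : IsTangle G k τ) (hτ' : IsTangle G k' τ') {s t : GSep V}
    (hsτ : s ∈ τ) (hsτ' : Prod.swap s ∈ τ') (ht : IsSep G t)
    (h1 : sOrd (corner s t) ≤ sOrd s) (h2 : sOrd (corner s (Prod.swap t)) ≤ sOrd s) :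
    (corner s t ∈ τ ∧ Prod.swap (corner s t) ∈ τ') ∨
    (corner s (Prod.swap t) ∈ τ ∧ Prod.swap (corner s (Prod.swap t)) ∈ τ') := by
  have hk : sOrd s < k := (hτ.1 s hsτ).2
  have hk' : sOrd s < k' := by
    have := (hτ'.1 _ hsτ').2; rwa [sOrd_swap'] at this
  have hsepS := (hτ.1 s hsτ).1
  have hts := isSep_swap' ht
  have hc1 : corner s t ∈ τ := corner_mem_tangle hτ hsτ ht (lt_of_le_of_lt h1 hk)
  have hc2 : corner s (Prod.swap t) ∈ τ :=
    corner_mem_tangle hτ hsτ hts (lt_of_le_of_lt h2 hk)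
  by_cases hq : corner s t ∈ τ'
  · refine Or.inr ⟨hc2, ?_⟩
    rcases hτ'.2.1 _ (isSep_corner hsepS hts) (lt_of_le_of_lt h2 hk') with h | h
    · exact (not_both_corners hτ' hsepS ht hsτ' hq h).elim
    · exact h
  · refine Or.inl ⟨hc1, ?_⟩
    rcases hτ'.2.1 _ (isSep_corner hsepS ht) (lt_of_le_of_lt h1 hk') with h | h
    · exact absurd h hq
    · exact h

end Aux

/-- Every pair of distinguishable tangles in a finite graph induces an
entanglement, consisting of the separations efficiently distinguishing the
two tangles. -/
theorem stmt_6 {V : Type*} [Fintype V] (G : SimpleGraph V) (k k' : ℕ)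
    (τ τ' : Set (GSep V)) (hτ : IsTangle G k τ) (hτ' : IsTangle G k' τ')
    (hdist : ∃ s : GSep V, Distinguishes s τ τ') :
    IsEntanglement G {s : GSep V | EffDistinguishes s τ τ'} := by
  classical
  refine ⟨?_, ?_, ?_, ?_⟩
  · -- nonempty
    obtain ⟨s₀, hs₀⟩ := hdist
    have hS : (sOrd '' {s : GSep V | Distinguishes s τ τ'}).Nonempty :=
      ⟨sOrd s₀, s₀, hs₀, rfl⟩
    obtain ⟨s₁, hs₁, hmin⟩ := Nat.sInf_mem hS
    refine ⟨s₁, hs₁, fun u hu => ?_⟩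
    rw [hmin]
    exact Nat.sInf_le ⟨u, hu, rfl⟩
  · intro s hs
    have hd : Distinguishes s τ τ' := hs.1
    have hsep : IsSep G s := by
      rcases hd with ⟨h1, _⟩ | ⟨_, h2⟩
      · exact (hτ.1 s h1).1
      · exact (hτ'.1 s h2).1
    exact ⟨hsep, proper_of_dist hτ hτ' hsep.1 hd⟩
  · intro s hs
    refine ⟨distinguishes_swap' hs.1, fun u hu => ?_⟩
    rw [sOrd_swap']
    exact hs.2 u hu
  · intro s hs t htSep _ h1 h2
    have hd : Distinguishes s τ τ' := hs.1
    rcases hd with ⟨h1', h2'⟩ | ⟨h1', h2'⟩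
    · rcases main_case hτ hτ' h1' h2' htSep h1 h2 with ⟨ha, hb⟩ | ⟨ha, hb⟩
      · have hdc : Distinguishes (corner s t) τ τ' := Or.inl ⟨ha, hb⟩
        have heq : sOrd (corner s t) = sOrd s := le_antisymm h1 (hs.2 _ hdc)
        exact Or.inl ⟨heq, hdc, fun u hu => heq.le.trans (hs.2 u hu)⟩
      · have hdc : Distinguishes (corner s (Prod.swap t)) τ τ' := Or.inl ⟨ha, hb⟩
        have heq : sOrd (corner s (Prod.swap t)) = sOrd s :=
          le_antisymm h2 (hs.2 _ hdc)
        exact Or.inr ⟨heq, hdc, fun u hu => heq.le.trans (hs.2 u hu)⟩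
    · rcases main_case hτ' hτ h2' h1' htSep h1 h2 with ⟨ha, hb⟩ | ⟨ha, hb⟩
      · have hdc : Distinguishes (corner s t) τ τ' := Or.inr ⟨hb, ha⟩
        have heq : sOrd (corner s t) = sOrd s := le_antisymm h1 (hs.2 _ hdc)
        exact Or.inl ⟨heq, hdc, fun u hu => heq.le.trans (hs.2 u hu)⟩
      · have hdc : Distinguishes (corner s (Prod.swap t)) τ τ' := Or.inr ⟨hb, ha⟩
        have heq : sOrd (corner s (Prod.swap t)) = sOrd s :=
          le_antisymm h2 (hs.2 _ hdc)
        exact Or.inr ⟨heq, hdc, fun u hu => heq.le.trans (hs.2 u hu)⟩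
end

section
/- Let G be a finite graph. Suppose that for all entanglements ε₁, ε₂ in G (possibly equal) and any crossing separations s₁ ∈ ε₁, s₂ ∈ ε₂, at least one of the following holds: (C1) there are opposite corners c₁, c₂ of s₁, s₂ with c₁ ∈ ε₁ and c₂ ∈ ε₂; (C2) two opposite corners of s₁, s₂ lie in ε₁ and the other two opposite corners lie in ε₂. Then the friendly separations of G are pairwise nested. -/
open Set

variable {V : Type*}

section Aux

lemma nested_symm {s t : GSep V} (h : Nested s t) : Nested t s := by
  unfold Nested at *; tauto

lemma nested_refl (s : GSep V) : Nested s s := Or.inl ⟨subset_rfl, subset_rfl⟩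

lemma nested_swap_left {s t : GSep V} : Nested (Prod.swap s) t ↔ Nested s t := by
  simp only [Nested, Prod.fst_swap, Prod.snd_swap]; tauto

lemma nested_swap_right {s t : GSep V} : Nested s (Prod.swap t) ↔ Nested s t := by
  simp only [Nested, Prod.fst_swap, Prod.snd_swap]; tauto

lemma corner_comm (s t : GSep V) : corner s t = corner t s := by
  simp [corner, Set.inter_comm, Set.union_comm]

lemma nested_corner {s t u : GSep V} (hst : Crosses s t)
    (hus : Nested u s) (hut : Nested u t) : Nested u (corner s t) := by
  have hst' : ¬ Nested s t := hst
  rcases hus with ⟨h1,h2⟩|⟨h1,h2⟩|⟨h1,h2⟩|⟨h1,h2⟩ <;>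
  rcases hut with ⟨g1,g2⟩|⟨g1,g2⟩|⟨g1,g2⟩|⟨g1,g2⟩ <;>
  first
  | exact Or.inl ⟨subset_inter h1 g1, union_subset h2 g2⟩
  | exact Or.inr (Or.inl ⟨h1.trans subset_union_left, inter_subset_left.trans h2⟩)
  | exact Or.inr (Or.inl ⟨g1.trans subset_union_right, inter_subset_right.trans g2⟩)
  | exact Or.inr (Or.inr (Or.inl ⟨subset_inter h1 g1, union_subset h2 g2⟩))
  | exact Or.inr (Or.inr (Or.inr ⟨h1.trans subset_union_left, inter_subset_left.trans h2⟩))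
  | exact Or.inr (Or.inr (Or.inr ⟨g1.trans subset_union_right, inter_subset_right.trans g2⟩))
  | exact absurd (Or.inr (Or.inr (Or.inl ⟨h2.trans g1, g2.trans h1⟩))) hst'

lemma nested_opp {s t u : GSep V} (hus : Nested u s) :
    Nested u (corner s t) ∨ Nested u (corner (Prod.swap s) (Prod.swap t)) := by
  rcases hus with ⟨h1,h2⟩|⟨h1,h2⟩|⟨h1,h2⟩|⟨h1,h2⟩ <;>
  first
  | exact Or.inl (Or.inr (Or.inl ⟨h1.trans subset_union_left, inter_subset_left.trans h2⟩))
  | exact Or.inr (Or.inr (Or.inl ⟨h1.trans subset_union_left, inter_subset_left.trans h2⟩))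
  | exact Or.inl (Or.inr (Or.inr (Or.inr ⟨h1.trans subset_union_left, inter_subset_left.trans h2⟩)))
  | exact Or.inr (Or.inr (Or.inr (Or.inr ⟨h1.trans subset_union_left, inter_subset_left.trans h2⟩)))

lemma nested_opp' {s t u : GSep V} (hut : Nested u t) :
    Nested u (corner s t) ∨ Nested u (corner (Prod.swap s) (Prod.swap t)) := by
  rw [corner_comm s t, corner_comm (Prod.swap s) (Prod.swap t)]
  exact nested_opp hut

lemma nested_corner_left (s t : GSep V) : Nested (corner s t) s :=
  Or.inl ⟨inter_subset_left, subset_union_left⟩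

lemma nested_corner_right (s t : GSep V) : Nested (corner s t) t :=
  Or.inl ⟨inter_subset_right, subset_union_right⟩

lemma crosses_swap_swap {s t : GSep V} (hst : Crosses s t) :
    Crosses (Prod.swap s) (Prod.swap t) := by
  unfold Crosses
  rw [nested_swap_left, nested_swap_right]; exact hst

lemma xnum_swap (G : SimpleGraph V) (t : GSep V) : xnum G (Prod.swap t) = xnum G t := by
  unfold xnum
  congr 1
  ext u
  simp only [Set.mem_setOf_eq, Crosses, nested_swap_left]

lemma key_ineq [Fintype V] {G : SimpleGraph V} {s t : GSep V}
    (hs : s ∈ EntSeps G) (ht : t ∈ EntSeps G) (hst : Crosses s t) :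
    xnum G (corner s t) + xnum G (corner (Prod.swap s) (Prod.swap t)) + 2 ≤
      xnum G s + xnum G t := by
  have hfinV : Finite V := Finite.of_fintype V
  set S := EntSeps G with hS
  set c := corner s t with hc
  set d := corner (Prod.swap s) (Prod.swap t) with hd
  set Xs := {u ∈ S | Crosses s u} with hXs
  set Xt := {u ∈ S | Crosses t u} with hXt
  set Xc := {u ∈ S | Crosses c u} with hXc
  set Xd := {u ∈ S | Crosses d u} with hXd
  have hst' : Crosses (Prod.swap s) (Prod.swap t) := crosses_swap_swap hst
  -- If u is nested with s and t, it is nested with both corners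
  have hkey : ∀ u, Nested s u → Nested t u → Nested c u ∧ Nested d u := by
    intro u h1 h2
    refine ⟨nested_symm (nested_corner hst (nested_symm h1) (nested_symm h2)), ?_⟩
    refine nested_symm (nested_corner hst' ?_ ?_)
    · exact nested_swap_right.mpr (nested_symm h1)
    · exact nested_swap_right.mpr (nested_symm h2)
  have hXc_sub : Xc ⊆ Xs ∪ Xt := by
    rintro u ⟨huS, huc⟩
    by_cases h1 : Crosses s u
    · exact Or.inl ⟨huS, h1⟩
    by_cases h2 : Crosses t u
    · exact Or.inr ⟨huS, h2⟩
    exact absurd (hkey u (not_not.mp h1) (not_not.mp h2)).1 huc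
  have hXd_sub : Xd ⊆ Xs ∪ Xt := by
    rintro u ⟨huS, hud⟩
    by_cases h1 : Crosses s u
    · exact Or.inl ⟨huS, h1⟩
    by_cases h2 : Crosses t u
    · exact Or.inr ⟨huS, h2⟩
    exact absurd (hkey u (not_not.mp h1) (not_not.mp h2)).2 hud
  have hInter_sub : Xc ∩ Xd ⊆ Xs ∩ Xt := by
    rintro u ⟨⟨huS, huc⟩, ⟨-, hud⟩⟩
    refine ⟨⟨huS, ?_⟩, ⟨huS, ?_⟩⟩
    · intro hn
      rcases nested_opp (t := t) (nested_symm hn) with hh | hh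
      · exact huc (nested_symm hh)
      · exact hud (nested_symm hh)
    · intro hn
      rcases nested_opp' (s := s) (nested_symm hn) with hh | hh
      · exact huc (nested_symm hh)
      · exact hud (nested_symm hh)
  have hcs : Nested c s := nested_corner_left s t
  have hct : Nested c t := nested_corner_right s t
  have hds : Nested d s := nested_swap_right.mp (nested_corner_left _ _)
  have hdt : Nested d t := nested_swap_right.mp (nested_corner_right _ _)
  have hs_notin : s ∉ Xc ∪ Xd := by
    rintro (⟨-, hcr⟩ | ⟨-, hcr⟩)
    · exact hcr hcs
    · exact hcr hds
  have ht_notin : t ∉ Xc ∪ Xd := by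
    rintro (⟨-, hcr⟩ | ⟨-, hcr⟩)
    · exact hcr hct
    · exact hcr hdt
  have hs_mem : s ∈ Xt := ⟨hs, fun hn => hst (nested_symm hn)⟩
  have ht_mem : t ∈ Xs := ⟨ht, hst⟩
  have hne : s ≠ t := by
    intro h; subst h; exact hst (nested_refl s)
  -- counting
  have e1 : (Xc ∪ Xd).ncard + (Xc ∩ Xd).ncard = Xc.ncard + Xd.ncard :=
    Set.ncard_union_add_ncard_inter Xc Xd (Set.toFinite _) (Set.toFinite _)
  have e4 : (Xs ∪ Xt).ncard + (Xs ∩ Xt).ncard = Xs.ncard + Xt.ncard :=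
    Set.ncard_union_add_ncard_inter Xs Xt (Set.toFinite _) (Set.toFinite _)
  have e3 : (Xc ∩ Xd).ncard ≤ (Xs ∩ Xt).ncard :=
    Set.ncard_le_ncard hInter_sub (Set.toFinite _)
  have e2 : (Xc ∪ Xd).ncard + 2 ≤ (Xs ∪ Xt).ncard := by
    have hsub : insert s (insert t (Xc ∪ Xd)) ⊆ Xs ∪ Xt := by
      rintro u (rfl | rfl | hu)
      · exact Or.inr hs_mem
      · exact Or.inl ht_mem
      · exact (Set.union_subset hXc_sub hXd_sub) hu
    have h1 : (insert t (Xc ∪ Xd)).ncard = (Xc ∪ Xd).ncard + 1 :=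
      Set.ncard_insert_of_notMem ht_notin (Set.toFinite _)
    have h2 : (insert s (insert t (Xc ∪ Xd))).ncard = (insert t (Xc ∪ Xd)).ncard + 1 := by
      refine Set.ncard_insert_of_notMem ?_ (Set.toFinite _)
      rintro (rfl | hu)
      · exact hne rfl
      · exact hs_notin hu
    have h3 := Set.ncard_le_ncard hsub (Set.toFinite _)
    omega
  have exc : xnum G c = Xc.ncard := rfl
  have exd : xnum G d = Xd.ncard := rfl
  have exs : xnum G s = Xs.ncard := rfl
  have ext' : xnum G t = Xt.ncard := rfl
  omega

end Aux

/-- If for all entanglements `ε₁, ε₂` in a finite graph `G` and all crossing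
separations `s₁ ∈ ε₁`, `s₂ ∈ ε₂` either (C1) there are opposite corners
`c₁ ∈ ε₁` and `c₂ ∈ ε₂`, or (C2) two opposite corners lie in `ε₁` and the
other two opposite corners lie in `ε₂`, then the friendly separations of `G`
are pairwise nested. -/
theorem stmt_8 {V : Type*} [Fintype V] (G : SimpleGraph V)
    (h : ∀ ε₁ ε₂ : Set (GSep V), IsEntanglement G ε₁ → IsEntanglement G ε₂ →
      ∀ s₁ ∈ ε₁, ∀ s₂ ∈ ε₂, Crosses s₁ s₂ →
        -- (C1): there are opposite corners c₁ ∈ ε₁ and c₂ ∈ ε₂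
        ((corner s₁ s₂ ∈ ε₁ ∧ corner (Prod.swap s₁) (Prod.swap s₂) ∈ ε₂) ∨
         (corner (Prod.swap s₁) (Prod.swap s₂) ∈ ε₁ ∧ corner s₁ s₂ ∈ ε₂) ∨
         (corner s₁ (Prod.swap s₂) ∈ ε₁ ∧ corner (Prod.swap s₁) s₂ ∈ ε₂) ∨
         (corner (Prod.swap s₁) s₂ ∈ ε₁ ∧ corner s₁ (Prod.swap s₂) ∈ ε₂)) ∨
        -- (C2): two opposite corners in ε₁ and the other two in ε₂
        ((corner s₁ s₂ ∈ ε₁ ∧ corner (Prod.swap s₁) (Prod.swap s₂) ∈ ε₁ ∧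
          corner s₁ (Prod.swap s₂) ∈ ε₂ ∧ corner (Prod.swap s₁) s₂ ∈ ε₂) ∨
         (corner s₁ (Prod.swap s₂) ∈ ε₁ ∧ corner (Prod.swap s₁) s₂ ∈ ε₁ ∧
          corner s₁ s₂ ∈ ε₂ ∧ corner (Prod.swap s₁) (Prod.swap s₂) ∈ ε₂))) :
    ∀ s t : GSep V, Friendly G s → Friendly G t → Nested s t := by
  intro s t hfs hft
  by_contra hst
  obtain ⟨ε₁, hε₁, hsε, hmin₁⟩ := hfs
  obtain ⟨ε₂, hε₂, htε, hmin₂⟩ := hft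
  have hsE : s ∈ EntSeps G := ⟨ε₁, hε₁, hsε⟩
  have htE : t ∈ EntSeps G := ⟨ε₂, hε₂, htε⟩
  have htwE : Prod.swap t ∈ EntSeps G := ⟨ε₂, hε₂, hε₂.2.2.1 t htε⟩
  have hstw : Crosses s (Prod.swap t) := by
    unfold Crosses; rw [nested_swap_right]; exact hst
  have k1 := key_ineq hsE htE hst
  have k2 := key_ineq hsE htwE hstw
  rw [Prod.swap_swap, xnum_swap] at k2
  rcases h ε₁ ε₂ hε₁ hε₂ s hsε t htε hst with
    (⟨h1, h2⟩ | ⟨h1, h2⟩ | ⟨h1, h2⟩ | ⟨h1, h2⟩) |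
    (⟨h1, h2, h3, h4⟩ | ⟨h1, h2, h3, h4⟩)
  · have a1 := hmin₁ _ h1
    have a2 := hmin₂ _ h2
    omega
  · have a1 := hmin₁ _ h1
    have a2 := hmin₂ _ h2
    omega
  · have a1 := hmin₁ _ h1
    have a2 := hmin₂ _ h2
    omega
  · have a1 := hmin₁ _ h1
    have a2 := hmin₂ _ h2
    omega
  · have a1 := hmin₁ _ h1
    have a2 := hmin₁ _ h2
    have a3 := hmin₂ _ h3
    have a4 := hmin₂ _ h4
    omega
  · have a1 := hmin₁ _ h1
    have a2 := hmin₁ _ h2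
    have a3 := hmin₂ _ h3
    have a4 := hmin₂ _ h4
    omega
end

section
/- Let G be a wheel graph (a cycle plus a centre vertex joined to all cycle vertices) with at least 4 vertices. Then there is no entanglement in G. -/
open Set

variable {V : Type*}

/-- The wheel graph on `n + 1` vertices: a cycle on `Fin n` together with a
centre vertex `none` joined to all cycle vertices. -/
def wheel (n : ℕ) : SimpleGraph (Option (Fin n)) :=
  SimpleGraph.fromRel (fun a b =>
    a = none ∨ ∃ i j : Fin n, a = some i ∧ b = some j ∧ (j : ℕ) = ((i : ℕ) + 1) % n)


lemma wheel_adj_none' {n : ℕ} (y : Fin n) : (wheel n).Adj none (some y) := by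
  rw [wheel, SimpleGraph.fromRel_adj]
  exact ⟨by simp, Or.inl (Or.inl rfl)⟩

lemma fin_val_one'' {n : ℕ} [NeZero n] (hn : 2 ≤ n) : ((1 : Fin n) : ℕ) = 1 := by
  rw [Fin.val_one']; exact Nat.mod_eq_of_lt (by omega)

lemma wheel_adj_succ' {n : ℕ} [NeZero n] (hn : 2 ≤ n) (x : Fin n) :
    (wheel n).Adj (some x) (some (x + 1)) := by
  have hone := fin_val_one'' (n := n) hn
  rw [wheel, SimpleGraph.fromRel_adj]
  constructor
  · intro h
    have h3 : x + 0 = x + 1 := by simpa using h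
    have h2 := congrArg Fin.val (add_left_cancel h3)
    rw [hone, Fin.val_zero] at h2
    omega
  · exact Or.inl (Or.inr ⟨x, x + 1, rfl, rfl, by rw [Fin.val_add, hone]⟩)

lemma wheel_adj_elim' {n : ℕ} [NeZero n] (hn : 2 ≤ n) {x y : Fin n}
    (h : (wheel n).Adj (some x) (some y)) : y = x + 1 ∨ x = y + 1 := by
  have hone := fin_val_one'' (n := n) hn
  rw [wheel, SimpleGraph.fromRel_adj] at h
  obtain ⟨-, h | h⟩ := h
  · rcases h with h | ⟨i, j, hi, hj, hij⟩
    · exact absurd h (by simp)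
    · left
      injection hi with h1; injection hj with h2; subst h1; subst h2
      apply Fin.val_injective
      rw [Fin.val_add, hone, hij]
  · rcases h with h | ⟨i, j, hi, hj, hij⟩
    · exact absurd h (by simp)
    · right
      injection hi with h1; injection hj with h2; subst h1; subst h2
      apply Fin.val_injective
      rw [Fin.val_add, hone, hij]

open Fin.NatCast

/-- Wheels (with at least 4 vertices) have no entanglements. -/
theorem stmt_11 (n : ℕ) (hn : 3 ≤ n) (ε : Set (GSep (Option (Fin n)))) :
    ¬ IsEntanglement (wheel n) ε := by
  classical
  intro hent
  haveI hnz : NeZero n := ⟨by omega⟩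
  have hn2 : 2 ≤ n := by omega
  have hone : ((1 : Fin n) : ℕ) = 1 := fin_val_one'' hn2
  obtain ⟨hne, hmem, hswap, hcl⟩ := hent
  -- choose s in ε with minimal first-side difference
  have hMne : {m | ∃ e ∈ ε, (e.1 \ e.2).ncard = m}.Nonempty := by
    obtain ⟨e, he⟩ := hne; exact ⟨_, e, he, rfl⟩
  obtain ⟨s, hsε, hsmin⟩ : ∃ s ∈ ε, ∀ e ∈ ε, (s.1 \ s.2).ncard ≤ (e.1 \ e.2).ncard := by
    obtain ⟨e, he, hval⟩ := Nat.sInf_mem hMne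
    exact ⟨e, he, fun f hf => hval ▸ Nat.sInf_le ⟨f, hf, rfl⟩⟩
  obtain ⟨⟨hcov, hedge⟩, ⟨hA, hB⟩⟩ := hmem s hsε
  have huniv : ∀ o : Option (Fin n), o ∈ s.1 ∪ s.2 := by
    intro o; rw [hcov]; exact mem_univ o
  -- the hub is in both sides
  have hc1 : none ∈ s.1 := by
    by_contra h
    rcases huniv none with h' | h'
    · exact h h'
    obtain ⟨o, ho⟩ := hA
    have hone' : o ≠ none := fun e => (e ▸ ho).2 h'
    obtain ⟨y, rfl⟩ := Option.ne_none_iff_exists'.mp hone'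
    exact hedge _ ho none ⟨h', h⟩ ((wheel_adj_none' y).symm)
  have hc2 : none ∈ s.2 := by
    by_contra h
    obtain ⟨o, ho⟩ := hB
    have hone' : o ≠ none := fun e => (e ▸ ho).2 hc1
    obtain ⟨y, rfl⟩ := Option.ne_none_iff_exists'.mp hone'
    exact hedge none ⟨hc1, h⟩ _ ho (wheel_adj_none' y)
  -- the cycle part of the left side
  set P : Set (Fin n) := {x | some x ∈ s.1 \ s.2} with hPdef
  obtain ⟨a0, ha0⟩ := hA
  have ha0n : a0 ≠ none := fun e => (e ▸ ha0).2 hc2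
  obtain ⟨x0, rfl⟩ := Option.ne_none_iff_exists'.mp ha0n
  have hx0 : x0 ∈ P := ha0
  obtain ⟨b0, hb0⟩ := hB
  have hb0n : b0 ≠ none := fun e => (e ▸ hb0).2 hc1
  obtain ⟨z', rfl⟩ := Option.ne_none_iff_exists'.mp hb0n
  have hz' : some z' ∈ s.2 \ s.1 := hb0
  have hz'P : z' ∉ P := fun h => hz'.2 h.1
  -- boundary steps
  have hstep : ∀ x : Fin n, x ∈ P → (x + 1) ∉ P → some (x + 1) ∈ s.1 ∩ s.2 := by
    intro x hx hx1
    have hadj := wheel_adj_succ' hn2 x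
    have h1 : some (x + 1) ∉ s.2 \ s.1 := fun h => hedge _ hx _ h hadj
    have hin1 : some (x + 1) ∈ s.1 := by
      by_contra hn1
      rcases huniv (some (x + 1)) with h | h
      · exact hn1 h
      · exact h1 ⟨h, hn1⟩
    have hin2 : some (x + 1) ∈ s.2 := by
      by_contra hn2'; exact hx1 ⟨hin1, hn2'⟩
    exact ⟨hin1, hin2⟩
  have hstep' : ∀ x : Fin n, x ∉ P → (x + 1) ∈ P → some x ∈ s.1 ∩ s.2 := by
    intro x hx hx1
    have hadj := (wheel_adj_succ' hn2 x).symm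
    have h1 : some x ∉ s.2 \ s.1 := fun h => hedge _ hx1 _ h hadj
    have hin1 : some x ∈ s.1 := by
      by_contra hn1
      rcases huniv (some x) with h | h
      · exact hn1 h
      · exact h1 ⟨h, hn1⟩
    have hin2 : some x ∈ s.2 := by
      by_contra hn2'; exact hx ⟨hin1, hn2'⟩
    exact ⟨hin1, hin2⟩
  -- an arc start v1 : in P with predecessor not in P
  obtain ⟨v1, hv1P, huP⟩ : ∃ v1 ∈ P, v1 - 1 ∉ P := by
    by_contra hcon
    push_neg at hcon
    have hall : ∀ t : ℕ, x0 - (t : Fin n) ∈ P := by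
      intro t; induction t with
      | zero => simpa using hx0
      | succ k ih =>
        have he : ((k + 1 : ℕ) : Fin n) = ((k : ℕ) : Fin n) + 1 := by push_cast; ring
        rw [he, ← sub_sub]
        exact hcon _ ih
    have := hall ((x0 - z').val)
    rw [Fin.cast_val_eq_self, sub_sub_cancel] at this
    exact hz'P this
  set u : Fin n := v1 - 1 with hudef
  have huv : u + 1 = v1 := sub_add_cancel v1 1
  have huAB : some u ∈ s.1 ∩ s.2 := hstep' u huP (by rw [huv]; exact hv1P)
  set βv : ℕ := (z' - v1).val with hβdef
  have hβlt : βv < n := (z' - v1).isLt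
  have hβpos : 0 < βv := by
    rcases Nat.eq_zero_or_pos βv with h | h
    · exfalso
      have : z' - v1 = 0 := Fin.val_injective (by simpa [hβdef] using h)
      exact hz'P (sub_eq_zero.mp this ▸ hv1P)
    · exact h
  -- find the end of the initial run
  have hwit : ∃ m : ℕ, v1 + ((m + 1 : ℕ) : Fin n) ∉ P := by
    refine ⟨βv - 1, ?_⟩
    have he : (βv - 1 + 1 : ℕ) = βv := by omega
    rw [he, hβdef, Fin.cast_val_eq_self, add_sub_cancel]
    exact hz'P
  set m0 := Nat.find hwit with hm0def
  set r := m0 + 1 with hrdef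
  set w : Fin n := v1 + ((r : ℕ) : Fin n) with hwdef
  have hwnP : w ∉ P := Nat.find_spec hwit
  have hallP : ∀ j ≤ m0, v1 + ((j : ℕ) : Fin n) ∈ P := by
    intro j hj
    match j with
    | 0 => simpa using hv1P
    | (i + 1) =>
      have := Nat.find_min hwit (show i < m0 by omega)
      simpa using this
  have hprevP : v1 + ((m0 : ℕ) : Fin n) ∈ P := hallP m0 le_rfl
  have hwsucc : (v1 + ((m0 : ℕ) : Fin n)) + 1 = w := by
    rw [hwdef, hrdef, Nat.cast_succ, add_assoc]
  have hwAB : some w ∈ s.1 ∩ s.2 := by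
    have := hstep _ hprevP (by rw [hwsucc]; exact hwnP)
    rwa [hwsucc] at this
  have hm0le : m0 ≤ βv - 1 := by
    apply Nat.find_le
    have he : (βv - 1 + 1 : ℕ) = βv := by omega
    rw [he, hβdef, Fin.cast_val_eq_self, add_sub_cancel]
    exact hz'P
  have hrle : r ≤ βv := by omega
  have hqw : (w - v1).val = r := by
    rw [hwdef, add_sub_cancel_left, Fin.val_natCast]
    exact Nat.mod_eq_of_lt (by omega)
  have hwz : w ≠ z' := by
    intro h
    exact (h ▸ hz').2 hwAB.1
  have hrlt : r < βv := by
    rcases hrle.lt_or_eq with h | h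
    · exact h
    exfalso
    apply hwz
    rw [hwdef, h, hβdef, Fin.cast_val_eq_self, add_sub_cancel]
  have hqu : (u - v1).val = n - 1 := by
    have h0 : (u - v1) + 1 = 0 := by rw [hudef]; abel
    have h1 : ((u - v1) + 1).val = 0 := by rw [h0]; exact Fin.val_zero n
    rw [Fin.val_add, hone] at h1
    have h2 := (u - v1).isLt
    rcases Nat.lt_or_ge ((u - v1).val + 1) n with h | h
    · rw [Nat.mod_eq_of_lt h] at h1; omega
    · omega
  have hzu : z' ≠ u := fun h => hz'.2 (h ▸ huAB.1)
  have hβlt' : βv < n - 1 := by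
    have hne' : βv ≠ n - 1 := by
      intro h
      apply hzu
      have : (z' - v1).val = (u - v1).val := by rw [← hβdef, hqu]; exact h
      have h2 : z' - v1 = u - v1 := Fin.val_injective this
      have := congrArg (· + v1) h2
      simpa [sub_add_cancel] using this
    omega
  -- the crossing separation
  set q : Fin n → ℕ := fun x => (x - v1).val with hqdef
  set C : Set (Option (Fin n)) := insert none (some '' {x | q x ≤ βv}) with hCdef
  set D : Set (Option (Fin n)) := insert none (some '' {x | q x = 0 ∨ βv ≤ q x}) with hDdef
  have hmemC : ∀ x : Fin n, some x ∈ C ↔ q x ≤ βv := by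
    intro x; simp [hCdef]
  have hmemD : ∀ x : Fin n, some x ∈ D ↔ (q x = 0 ∨ βv ≤ q x) := by
    intro x; simp [hDdef]
  have hnoneC : none ∈ C := mem_insert _ _
  have hnoneD : none ∈ D := mem_insert _ _
  have hq_inj : ∀ x y : Fin n, q x = q y → x = y := by
    intro x y h
    have h2 : x - v1 = y - v1 := Fin.val_injective h
    have := congrArg (· + v1) h2
    simpa [sub_add_cancel] using this
  have hqv1 : q v1 = 0 := by simp [hqdef]
  have hqz : q z' = βv := rfl
  have hqsucc : ∀ x : Fin n, q (x + 1) = (q x + 1) % n := by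
    intro x
    have h2 : (x + 1) - v1 = (x - v1) + 1 := by abel
    show ((x + 1) - v1).val = _
    rw [h2, Fin.val_add, hone]
  have hqbound : ∀ x : Fin n, q x < n := fun x => (x - v1).isLt
  -- t = (C, D) is a separation
  have hsepT : IsSep (wheel n) (C, D) := by
    constructor
    · ext o
      simp only [mem_union, mem_univ, iff_true]
      match o with
      | none => exact Or.inl hnoneC
      | some x =>
        rcases le_total (q x) βv with h | h
        · exact Or.inl ((hmemC x).mpr h)
        · exact Or.inr ((hmemD x).mpr (Or.inr h))
    · rintro a ⟨haC, haD⟩ b ⟨hbD, hbC⟩ hadj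
      have han : a ≠ none := fun e => haD (e ▸ hnoneD)
      have hbn : b ≠ none := fun e => hbC (e ▸ hnoneC)
      obtain ⟨x, rfl⟩ := Option.ne_none_iff_exists'.mp han
      obtain ⟨y, rfl⟩ := Option.ne_none_iff_exists'.mp hbn
      have hx1 : q x ≤ βv := (hmemC x).mp haC
      have hx2 : ¬(q x = 0 ∨ βv ≤ q x) := fun h => haD ((hmemD x).mpr h)
      push_neg at hx2
      have hxlo : 0 < q x := Nat.pos_of_ne_zero hx2.1
      have hxhi : q x < βv := hx2.2
      have hy2 : ¬ q y ≤ βv := fun h => hbC ((hmemC y).mpr h)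
      push_neg at hy2
      rcases wheel_adj_elim' hn2 hadj with h | h
      · subst h
        rw [hqsucc, Nat.mod_eq_of_lt (by have := hqbound x; omega)] at hy2
        omega
      · subst h
        rw [hqsucc] at hx1 hxlo hxhi
        have hyb := hqbound y
        rcases Nat.lt_or_ge (q y + 1) n with h | h
        · rw [Nat.mod_eq_of_lt h] at hxhi; omega
        · have : (q y + 1) % n = 0 := by
            have : q y + 1 = n := by omega
            rw [this, Nat.mod_self]
          rw [this] at hxlo; omega
  -- crossing
  have huC : some u ∉ C := by
    rw [hmemC]
    show ¬ (u - v1).val ≤ βv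
    omega
  have hwD : some w ∉ D := by
    rw [hmemD]
    show ¬ ((w - v1).val = 0 ∨ βv ≤ (w - v1).val)
    rw [hqw]
    omega
  have hcross : Crosses s (C, D) := by
    rintro (⟨h1, h2⟩ | ⟨h1, h2⟩ | ⟨h1, h2⟩ | ⟨h1, h2⟩)
    · exact huC (h1 huAB.1)
    · exact hwD (h1 hwAB.1)
    · exact huC (h1 huAB.2)
    · exact hwD (h1 hwAB.2)
  -- separator of t
  have hCDsep : C ∩ D ⊆ {none, some v1, some z'} := by
    rintro o ⟨hoC, hoD⟩
    match o with
    | none => exact Or.inl rfl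
    | some x =>
      have h1 : q x ≤ βv := (hmemC x).mp hoC
      rcases (hmemD x).mp hoD with h | h
      · exact Or.inr (Or.inl (by rw [hq_inj x v1 (by rw [hqv1]; exact h)]))
      · exact Or.inr (Or.inr (by rw [hq_inj x z' (by rw [hqz]; omega)]; exact rfl))
  have hv1C : some v1 ∈ C := (hmemC v1).mpr (by rw [hqv1]; omega)
  have hv1D : some v1 ∈ D := (hmemD v1).mpr (Or.inl hqv1)
  have hz'C : some z' ∈ C := (hmemC z').mpr (by rw [hqz])
  have hz'D : some z' ∈ D := (hmemD z').mpr (Or.inr (by rw [hqz]))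
  -- corner separators
  have hsep1 : (s.1 ∩ C) ∩ (s.2 ∪ D) = insert (some v1) (s.1 ∩ s.2 ∩ C) := by
    ext o
    simp only [mem_inter_iff, mem_union, mem_insert_iff]
    constructor
    · rintro ⟨⟨ho1, hoC⟩, ho2 | hoD⟩
      · exact Or.inr ⟨⟨ho1, ho2⟩, hoC⟩
      · rcases hCDsep ⟨hoC, hoD⟩ with h | h | h
        · subst h; exact Or.inr ⟨⟨ho1, hc2⟩, hoC⟩
        · exact Or.inl h
        · exact absurd (h ▸ ho1) hz'.2
    · rintro (rfl | ⟨⟨ho1, ho2⟩, hoC⟩)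
      · exact ⟨⟨hv1P.1, hv1C⟩, Or.inr hv1D⟩
      · exact ⟨⟨ho1, hoC⟩, Or.inl ho2⟩
  have hsep2 : (s.1 ∩ D) ∩ (s.2 ∪ C) = insert (some v1) (s.1 ∩ s.2 ∩ D) := by
    ext o
    simp only [mem_inter_iff, mem_union, mem_insert_iff]
    constructor
    · rintro ⟨⟨ho1, hoD⟩, ho2 | hoC⟩
      · exact Or.inr ⟨⟨ho1, ho2⟩, hoD⟩
      · rcases hCDsep ⟨hoC, hoD⟩ with h | h | h
        · subst h; exact Or.inr ⟨⟨ho1, hc2⟩, hoD⟩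
        · exact Or.inl h
        · exact absurd (h ▸ ho1) hz'.2
    · rintro (rfl | ⟨⟨ho1, ho2⟩, hoD⟩)
      · exact ⟨⟨hv1P.1, hv1D⟩, Or.inr hv1C⟩
      · exact ⟨⟨ho1, hoD⟩, Or.inl ho2⟩
  -- order bounds
  have hkpos : 1 ≤ (s.1 ∩ s.2).ncard :=
    Set.ncard_pos (Set.toFinite _) |>.mpr ⟨_, huAB⟩
  have hub1 : (s.1 ∩ s.2 ∩ C).ncard ≤ (s.1 ∩ s.2).ncard - 1 := by
    have hsub : s.1 ∩ s.2 ∩ C ⊆ (s.1 ∩ s.2) \ {some u} := by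
      rintro o ⟨ho12, hoC⟩
      exact ⟨ho12, fun h => huC (h ▸ hoC)⟩
    calc (s.1 ∩ s.2 ∩ C).ncard ≤ ((s.1 ∩ s.2) \ {some u}).ncard :=
          Set.ncard_le_ncard hsub (Set.toFinite _)
      _ = (s.1 ∩ s.2).ncard - 1 := Set.ncard_diff_singleton_of_mem huAB
  have hub2 : (s.1 ∩ s.2 ∩ D).ncard ≤ (s.1 ∩ s.2).ncard - 1 := by
    have hsub : s.1 ∩ s.2 ∩ D ⊆ (s.1 ∩ s.2) \ {some w} := by
      rintro o ⟨ho12, hoD⟩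
      exact ⟨ho12, fun h => hwD (h ▸ hoD)⟩
    calc (s.1 ∩ s.2 ∩ D).ncard ≤ ((s.1 ∩ s.2) \ {some w}).ncard :=
          Set.ncard_le_ncard hsub (Set.toFinite _)
      _ = (s.1 ∩ s.2).ncard - 1 := Set.ncard_diff_singleton_of_mem hwAB
  have hv1not : some v1 ∉ s.2 := hv1P.2
  have hord1 : sOrd (corner s (C, D)) ≤ sOrd s := by
    show ((s.1 ∩ C) ∩ (s.2 ∪ D)).ncard ≤ (s.1 ∩ s.2).ncard
    rw [hsep1, Set.ncard_insert_of_notMem (fun h => hv1not h.1.2) (Set.toFinite _)]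
    omega
  have hord2 : sOrd (corner s (Prod.swap (C, D))) ≤ sOrd s := by
    show ((s.1 ∩ D) ∩ (s.2 ∪ C)).ncard ≤ (s.1 ∩ s.2).ncard
    rw [hsep2, Set.ncard_insert_of_notMem (fun h => hv1not h.1.2) (Set.toFinite _)]
    omega
  -- apply the entanglement property and derive the contradiction
  have hapos : 1 ≤ (s.1 \ s.2).ncard :=
    Set.ncard_pos (Set.toFinite _) |>.mpr ⟨_, hv1P⟩
  have hsmall : ((s.1 \ s.2) \ {some v1}).ncard = (s.1 \ s.2).ncard - 1 :=
    Set.ncard_diff_singleton_of_mem (s := s.1 \ s.2) hv1P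
  rcases hcl s hsε (C, D) hsepT hcross hord1 hord2 with ⟨-, hcorn⟩ | ⟨-, hcorn⟩
  · have hso : (s.1 ∩ C) \ (s.2 ∪ D) ⊆ (s.1 \ s.2) \ {some v1} := by
      rintro o ⟨⟨ho1, hoC⟩, ho2⟩
      rw [mem_union] at ho2
      push_neg at ho2
      exact ⟨⟨ho1, ho2.1⟩, fun h => ho2.2 (h ▸ hv1D)⟩
    have h1 := hsmin _ hcorn
    have h2 : ((s.1 ∩ C) \ (s.2 ∪ D)).ncard ≤ (s.1 \ s.2).ncard - 1 :=
      hsmall ▸ Set.ncard_le_ncard hso (Set.toFinite _)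
    have h3 : ((corner s (C, D)).1 \ (corner s (C, D)).2).ncard
        = ((s.1 ∩ C) \ (s.2 ∪ D)).ncard := rfl
    omega
  · have hso : (s.1 ∩ D) \ (s.2 ∪ C) ⊆ (s.1 \ s.2) \ {some v1} := by
      rintro o ⟨⟨ho1, hoD⟩, ho2⟩
      rw [mem_union] at ho2
      push_neg at ho2
      exact ⟨⟨ho1, ho2.1⟩, fun h => ho2.2 (h ▸ hv1C)⟩
    have h1 := hsmin _ hcorn
    have h2 : ((s.1 ∩ D) \ (s.2 ∪ C)).ncard ≤ (s.1 \ s.2).ncard - 1 :=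
      hsmall ▸ Set.ncard_le_ncard hso (Set.toFinite _)
    have h3 : ((corner s (Prod.swap (C, D))).1 \ (corner s (Prod.swap (C, D))).2).ncard
        = ((s.1 ∩ D) \ (s.2 ∪ C)).ncard := rfl
    omega
end

section
/- Let G be a locally finite connected graph, let k ∈ ℕ, and let {A,B} be a tight separation of G of finite order. Then {A,B} is crossed by only finitely many tight separations of G of order at most k. -/
open Set

variable {V : Type*}

/-- The neighbourhood of a set of vertices: the vertices outside it with a
neighbour inside it. -/
def nbhd (G : SimpleGraph V) (C : Set V) : Set V :=
  {v | v ∉ C ∧ ∃ c ∈ C, G.Adj v c}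

/-- `C` is (the vertex set of) a component of `G - S`. -/
def IsCompOf (G : SimpleGraph V) (S C : Set V) : Prop :=
  C.Nonempty ∧ C ⊆ Sᶜ ∧ (G.induce C).Connected ∧
  ∀ x ∈ C, ∀ y ∉ C, y ∉ S → ¬ G.Adj x y

/-- A separation `{A,B}` is tight if there are components `C_A ⊆ A \ B` and
`C_B ⊆ B \ A` of `G - (A ∩ B)` with `N_G(C_A) = A ∩ B = N_G(C_B)`. -/
def TightSep (G : SimpleGraph V) (s : GSep V) : Prop :=
  IsSep G s ∧ ∃ CA CB : Set V,
    IsCompOf G (s.1 ∩ s.2) CA ∧ IsCompOf G (s.1 ∩ s.2) CB ∧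
    CA ⊆ s.1 \ s.2 ∧ CB ⊆ s.2 \ s.1 ∧
    nbhd G CA = s.1 ∩ s.2 ∧ nbhd G CB = s.1 ∩ s.2

/-! ### Auxiliary machinery -/

section Aux

open SimpleGraph

variable {G : SimpleGraph V} {W C D S T : Set V} {a b c d u v x y : V}

/-- Reachability via a walk whose support lies in `W`. -/
def ReachIn (G : SimpleGraph V) (W : Set V) (a b : V) : Prop :=
  ∃ w : G.Walk a b, ∀ x ∈ w.support, x ∈ W

lemma ReachIn.refl (ha : a ∈ W) : ReachIn G W a a :=
  ⟨Walk.nil, by simp [ha]⟩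

lemma ReachIn.mem_left (h : ReachIn G W a b) : a ∈ W :=
  h.choose_spec _ h.choose.start_mem_support

lemma ReachIn.mem_right (h : ReachIn G W a b) : b ∈ W :=
  h.choose_spec _ h.choose.end_mem_support

lemma ReachIn.symm (h : ReachIn G W a b) : ReachIn G W b a := by
  obtain ⟨w, hw⟩ := h
  exact ⟨w.reverse, fun x hx => hw x (by rwa [Walk.support_reverse, List.mem_reverse] at hx)⟩

lemma ReachIn.trans (h1 : ReachIn G W a b) (h2 : ReachIn G W b c) : ReachIn G W a c := by
  obtain ⟨w1, hw1⟩ := h1; obtain ⟨w2, hw2⟩ := h2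
  exact ⟨w1.append w2, fun x hx => by
    rcases (Walk.mem_support_append_iff _ _).1 hx with h | h
    · exact hw1 x h
    · exact hw2 x h⟩

lemma ReachIn.mono {W' : Set V} (hW : W ⊆ W') (h : ReachIn G W a b) : ReachIn G W' a b := by
  obtain ⟨w, hw⟩ := h; exact ⟨w, fun x hx => hW (hw x hx)⟩

lemma reachIn_of_adj (hadj : G.Adj a b) (ha : a ∈ W) (hb : b ∈ W) : ReachIn G W a b :=
  ⟨Walk.cons hadj Walk.nil, by
    intro x hx
    simp only [Walk.support_cons, Walk.support_nil, List.mem_cons, List.mem_singleton] at hx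
    rcases hx with rfl | rfl | h
    · exact ha
    · exact hb
    · exact absurd h List.not_mem_nil⟩

lemma ReachIn.extend (h : ReachIn G W a b) (hadj : G.Adj b c) (hc : c ∈ W) :
    ReachIn G W a c :=
  h.trans (reachIn_of_adj hadj h.mem_right hc)

lemma ReachIn.head_extend (hadj : G.Adj a b) (ha : a ∈ W) (h : ReachIn G W b c) :
    ReachIn G W a c :=
  (reachIn_of_adj hadj ha h.mem_left).trans h

lemma ReachIn.reachable (h : ReachIn G W a b) : G.Reachable a b := ⟨h.choose⟩

/-- Walk invariance: a predicate closed under edges inside `W` propagates along walks. -/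
lemma walk_invariant {P : Set V} (hstep : ∀ x ∈ P, ∀ y ∈ W, G.Adj x y → y ∈ P) :
    ∀ {a b : V} (w : G.Walk a b), (∀ x ∈ w.support, x ∈ W) → a ∈ P → b ∈ P := by
  intro a b w
  induction w with
  | nil => exact fun _ h => h
  | @cons u p q hadj w ih =>
    intro hw ha
    have hp : p ∈ W := hw _ (by simp [Walk.support_cons, Walk.start_mem_support])
    exact ih (fun z hz => hw z (by simp only [Walk.support_cons, List.mem_cons]; right; exact hz))
      (hstep u ha p hp hadj)

lemma ReachIn.invariant {P : Set V} (hstep : ∀ x ∈ P, ∀ y ∈ W, G.Adj x y → y ∈ P)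
    (h : ReachIn G W a b) (ha : a ∈ P) : b ∈ P := by
  obtain ⟨w, hw⟩ := h
  exact walk_invariant hstep w hw ha

/-- Any walk from inside `A` to outside `A` has an exiting edge. -/
lemma walk_exit {A : Set V} :
    ∀ {a b : V} (w : G.Walk a b), a ∈ A → b ∉ A →
      ∃ x ∈ A, ∃ y, y ∉ A ∧ G.Adj x y ∧ x ∈ w.support ∧ y ∈ w.support := by
  intro a b w
  induction w with
  | nil => exact fun ha hb => absurd ha hb
  | @cons u p q hadj w ih =>
    intro ha hb
    by_cases hp : p ∈ A
    · obtain ⟨x, hx, z, hz1, hz2, hz3, hz4⟩ := ih hp hb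
      exact ⟨x, hx, z, hz1, hz2,
        by simp only [Walk.support_cons, List.mem_cons]; right; exact hz3,
        by simp only [Walk.support_cons, List.mem_cons]; right; exact hz4⟩
    · exact ⟨u, ha, p, hp, hadj, by simp [Walk.support_cons],
        by simp [Walk.support_cons, Walk.start_mem_support]⟩

/-- A walk from `A \ B` to `B \ A` must meet `A ∩ B`, provided there are no
edges between the two strict sides. -/
lemma walk_cross {A B : Set V} (hcov : A ∪ B = Set.univ)
    (hno : ∀ a ∈ A \ B, ∀ b ∈ B \ A, ¬ G.Adj a b) :
    ∀ {a b : V} (w : G.Walk a b), a ∈ A \ B → b ∈ B \ A →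
      ∃ y ∈ w.support, y ∈ A ∩ B := by
  intro a b w
  induction w with
  | nil => exact fun ha hb => absurd hb.1 ha.2
  | @cons u p q hadj w ih =>
    intro ha hb
    have hp : p ∈ A ∪ B := hcov ▸ Set.mem_univ p
    by_cases hpA : p ∈ A <;> by_cases hpB : p ∈ B
    · exact ⟨p, by simp [Walk.support_cons, Walk.start_mem_support], ⟨hpA, hpB⟩⟩
    · obtain ⟨y, hy1, hy2⟩ := ih ⟨hpA, hpB⟩ hb
      exact ⟨y, by simp only [Walk.support_cons, List.mem_cons]; right; exact hy1, hy2⟩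
    · exact absurd hadj (hno u ha p ⟨hpB, hpA⟩)
    · rcases hp with h | h
      · exact absurd h hpA
      · exact absurd h hpB

/-- From connectedness of an induced subgraph to `ReachIn`. -/
lemma reachIn_of_induce_connected (hC : (G.induce C).Connected) (ha : a ∈ C) (hb : b ∈ C) :
    ReachIn G C a b := by
  obtain ⟨w⟩ := hC.preconnected ⟨a, ha⟩ ⟨b, hb⟩
  suffices h : ∀ (p q : C) (w : (G.induce C).Walk p q), ReachIn G C p q from h _ _ w
  intro p q w
  induction w with
  | nil => exact ReachIn.refl (Subtype.coe_prop _)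
  | @cons u p' q' hadj w ih =>
    exact ReachIn.head_extend hadj (Subtype.coe_prop _) ih

/-- From `ReachIn` to connectedness of the induced subgraph. -/
lemma induce_connected_of_reachIn (hne : C.Nonempty)
    (h : ∀ a ∈ C, ∀ b ∈ C, ReachIn G C a b) : (G.induce C).Connected := by
  have key : ∀ {a b : V} (w : G.Walk a b), (∀ x ∈ w.support, x ∈ C) →
      ∀ (ha : a ∈ C) (hb : b ∈ C), (G.induce C).Reachable ⟨a, ha⟩ ⟨b, hb⟩ := by
    intro a b w
    induction w with
    | nil => intro _ ha hb; rfl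
    | @cons u p q hadj w ih =>
      intro hw ha hb
      have hp : p ∈ C := hw _ (by simp [Walk.support_cons, Walk.start_mem_support])
      have hstep : (G.induce C).Adj ⟨u, ha⟩ ⟨p, hp⟩ := hadj
      exact hstep.reachable.trans
        (ih (fun z hz => hw z (by simp only [Walk.support_cons, List.mem_cons]; right; exact hz))
          hp hb)
  rw [connected_iff]
  refine ⟨?_, ⟨⟨hne.choose, hne.choose_spec⟩⟩⟩
  rintro ⟨a, ha⟩ ⟨b, hb⟩
  obtain ⟨w, hw⟩ := h a ha b hb
  exact key w hw ha hb

lemma IsCompOf.reachIn (h : IsCompOf G S C) (ha : a ∈ C) (hb : b ∈ C) : ReachIn G C a b :=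
  reachIn_of_induce_connected h.2.2.1 ha hb

lemma IsCompOf.eq_of_mem (h1 : IsCompOf G S C) (h2 : IsCompOf G S D)
    (hx1 : x ∈ C) (hx2 : x ∈ D) : C = D := by
  have sub : ∀ {C D : Set V}, IsCompOf G S C → IsCompOf G S D → x ∈ C → x ∈ D → C ⊆ D := by
    intro C D h1 h2 hx1 hx2 a ha
    refine ReachIn.invariant (P := D) ?_ (h1.reachIn hx1 ha) hx2
    intro p hp q hq hadj
    by_contra hqD
    exact h2.2.2.2 p hp q hqD (fun hqS => (h1.2.1 hq) hqS) hadj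
  exact subset_antisymm (sub h1 h2 hx1 hx2) (sub h2 h1 hx2 hx1)

lemma eq_univ_of_no_boundary (hconn : G.Connected) (hne : C.Nonempty)
    (hcl : ∀ x ∈ C, ∀ y, G.Adj x y → y ∈ C) : C = Set.univ := by
  obtain ⟨x0, hx0⟩ := hne
  ext z
  simp only [Set.mem_univ, iff_true]
  obtain ⟨w⟩ := hconn.preconnected x0 z
  exact walk_invariant (W := Set.univ) (P := C)
    (fun p hp q _ hadj => hcl p hp q hadj) w (fun _ _ => Set.mem_univ _) hx0

lemma exists_boundary (hconn : G.Connected) (hne : C.Nonempty) (hnu : C ≠ Set.univ) :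
    ∃ x ∈ C, ∃ y, y ∉ C ∧ G.Adj x y := by
  by_contra h
  push_neg at h
  exact hnu (eq_univ_of_no_boundary hconn hne (fun x hx y hadj => by
    by_contra hy
    exact h x hx y hy hadj))

lemma IsCompOf.exists_adj_sep (hconn : G.Connected) (h : IsCompOf G S C) (hS : S.Nonempty) :
    ∃ x ∈ C, ∃ y ∈ S, G.Adj x y := by
  have hnu : C ≠ Set.univ := by
    intro he
    exact (h.2.1 (he ▸ Set.mem_univ hS.choose)) hS.choose_spec
  obtain ⟨x, hx, y, hy, hadj⟩ := exists_boundary hconn h.1 hnu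
  have hyS : y ∈ S := by
    by_contra hyS
    exact h.2.2.2 x hx y hy hyS hadj
  exact ⟨x, hx, y, hyS, hadj⟩

lemma walk_support_reachIn :
    ∀ {a b : V} (w : G.Walk a b), (∀ x ∈ w.support, x ∈ W) →
      ∀ x ∈ w.support, ReachIn G W a x := by
  intro a b w
  induction w with
  | nil =>
    intro hw x hx
    simp only [Walk.support_nil, List.mem_singleton] at hx
    subst hx
    exact ReachIn.refl (hw _ (by simp))
  | @cons u p q hadj w ih =>
    intro hw x hx
    have hu : u ∈ W := hw _ (by simp [Walk.support_cons])
    have hp : p ∈ W := hw _ (by simp [Walk.support_cons, Walk.start_mem_support])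
    have hw' : ∀ z ∈ w.support, z ∈ W := fun z hz =>
      hw z (by simp only [Walk.support_cons, List.mem_cons]; right; exact hz)
    rw [Walk.support_cons, List.mem_cons] at hx
    rcases hx with rfl | hx
    · exact ReachIn.refl hu
    · exact ReachIn.head_extend hadj hu (ih hw' x hx)

/-- Existence of the component of `G - S` containing a given vertex. -/
lemma exists_isCompOf (G : SimpleGraph V) (hv : v ∉ S) : ∃ C, IsCompOf G S C ∧ v ∈ C := by
  have hv' : v ∈ Sᶜ := hv
  have hvv : ReachIn G Sᶜ v v := ReachIn.refl hv'
  refine ⟨{w | ReachIn G Sᶜ v w}, ⟨?_, fun w hw => hw.mem_right, ?_, ?_⟩, ?_⟩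
  · exact ⟨v, hvv⟩
  · have hne : ({w | ReachIn G Sᶜ v w} : Set V).Nonempty := ⟨v, hvv⟩
    apply induce_connected_of_reachIn hne
    have key : ∀ x, ReachIn G Sᶜ v x → ReachIn G {w | ReachIn G Sᶜ v w} v x := by
      rintro x ⟨w, hw⟩
      exact ⟨w, fun z hz => walk_support_reachIn w hw z hz⟩
    intro a ha b hb
    exact (key a ha).symm.trans (key b hb)
  · intro p hp q hq hqS hadj
    exact hq (ReachIn.extend hp hadj (Set.mem_compl hqS))
  · exact hvv

lemma mem_side {t : GSep V} (ht : IsSep G t) (h : v ∉ t.1 ∩ t.2) :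
    v ∈ t.1 \ t.2 ∨ v ∈ t.2 \ t.1 := by
  have hv : v ∈ t.1 ∪ t.2 := ht.1 ▸ Set.mem_univ v
  rcases hv with h1 | h2
  · exact Or.inl ⟨h1, fun h2 => h ⟨h1, h2⟩⟩
  · exact Or.inr ⟨h2, fun h1 => h ⟨h1, h2⟩⟩

/-- A `ReachIn`-connected set avoiding the separator of `t` lies on one side. -/
lemma side_of_connected {t : GSep V} (ht : IsSep G t)
    (hcr : ∀ a ∈ C, ∀ b ∈ C, ReachIn G C a b) (hdisj : ∀ x ∈ C, x ∉ t.1 ∩ t.2) :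
    C ⊆ t.1 \ t.2 ∨ C ⊆ t.2 \ t.1 := by
  rcases C.eq_empty_or_nonempty with rfl | ⟨x0, hx0⟩
  · exact Or.inl (by simp)
  have hstep1 : ∀ x ∈ t.1 \ t.2, ∀ y ∈ C, G.Adj x y → y ∈ t.1 \ t.2 := by
    intro x hx y hy hadj
    rcases mem_side ht (hdisj y hy) with h | h
    · exact h
    · exact absurd hadj (ht.2 x hx y h)
  have hstep2 : ∀ x ∈ t.2 \ t.1, ∀ y ∈ C, G.Adj x y → y ∈ t.2 \ t.1 := by
    intro x hx y hy hadj
    rcases mem_side ht (hdisj y hy) with h | h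
    · exact absurd hadj.symm (ht.2 y h x hx)
    · exact h
  rcases mem_side ht (hdisj x0 hx0) with h | h
  · exact Or.inl (fun y hy => ReachIn.invariant hstep1 (hcr x0 hx0 y hy) h)
  · exact Or.inr (fun y hy => ReachIn.invariant hstep2 (hcr x0 hx0 y hy) h)

lemma isSep_swap {t : GSep V} (ht : IsSep G t) : IsSep G (t.2, t.1) :=
  ⟨by rw [Set.union_comm]; exact ht.1, fun a ha b hb hadj => ht.2 b hb a ha hadj.symm⟩

/-! ### Finitely many separations with a given separator -/

lemma comps_finite (hlf : ∀ v : V, (G.neighborSet v).Finite) (hconn : G.Connected)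
    (hT : T.Finite) : {C | IsCompOf G T C}.Finite := by
  rcases T.eq_empty_or_nonempty with rfl | hTne
  · refine (Set.finite_singleton Set.univ).subset ?_
    intro C hC
    have hCu : C = Set.univ := eq_univ_of_no_boundary hconn hC.1 (fun x hx y hadj => by
      by_contra hy
      exact hC.2.2.2 x hx y hy (Set.notMem_empty y) hadj)
    simp [hCu]
  · obtain ⟨v0, hv0⟩ := id hTne
    set F := ⋃ y ∈ T, G.neighborSet y with hF
    have hFfin : F.Finite := hT.biUnion fun y _ => hlf y
    have hex : ∀ C ∈ {C | IsCompOf G T C}, (C ∩ F).Nonempty := by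
      intro C hC
      obtain ⟨x, hx, y, hy, hadj⟩ := hC.exists_adj_sep hconn hTne
      exact ⟨x, hx, Set.mem_biUnion hy hadj.symm⟩
    classical
    set f : Set V → V := fun C => if h : (C ∩ F).Nonempty then h.choose else v0 with hf
    have hmem : ∀ C ∈ {C | IsCompOf G T C}, f C ∈ C ∩ F := by
      intro C hC
      have h := hex C hC
      simp only [hf]
      rw [dif_pos h]
      exact h.choose_spec
    refine Set.Finite.of_finite_image (f := f) (hFfin.subset ?_) ?_
    · rintro _ ⟨C, hC, rfl⟩
      exact (hmem C hC).2
    · intro C hC C' hC' he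
      exact hC.eq_of_mem hC' (hmem C hC).1 (he ▸ (hmem C' hC').1)

lemma slice_finite (hlf : ∀ v : V, (G.neighborSet v).Finite) (hconn : G.Connected)
    (hT : T.Finite) : {t : GSep V | IsSep G t ∧ t.1 ∩ t.2 = T}.Finite := by
  have hcomps : {C | IsCompOf G T C}.Finite := comps_finite hlf hconn hT
  have key : ∀ r : GSep V, IsSep G r → r.1 ∩ r.2 = T →
      r.1 = T ∪ ⋃₀ {C | IsCompOf G T C ∧ C ⊆ r.1} := by
    intro r hr hrT
    apply subset_antisymm
    · intro x hx
      by_cases hx2 : x ∈ r.2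
      · exact Set.mem_union_left _ (hrT ▸ ⟨hx, hx2⟩)
      · have hxT : x ∉ T := fun h => hx2 (hrT ▸ h).2
        obtain ⟨K, hK, hxK⟩ := exists_isCompOf G hxT
        have hside : K ⊆ r.1 \ r.2 ∨ K ⊆ r.2 \ r.1 :=
          side_of_connected hr (fun a ha b hb => hK.reachIn ha hb)
            (fun z hz h => (hK.2.1 hz) (hrT ▸ h))
        rcases hside with h | h
        · exact Set.mem_union_right _ ⟨K, ⟨hK, fun z hz => (h hz).1⟩, hxK⟩
        · exact absurd (h hxK).1 (fun h1 => hx2 h1)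
    · rintro x (hx | ⟨K, ⟨hK, hKr⟩, hxK⟩)
      · exact (hrT ▸ hx).1
      · exact hKr hxK
  have key2 : ∀ r : GSep V, IsSep G r → r.1 ∩ r.2 = T → r.2 = T ∪ (r.1)ᶜ := by
    intro r hr hrT
    ext z
    constructor
    · intro hz
      by_cases hz1 : z ∈ r.1
      · exact Set.mem_union_left _ (hrT ▸ ⟨hz1, hz⟩)
      · exact Set.mem_union_right _ hz1
    · rintro (hz | hz)
      · exact (hrT ▸ hz).2
      · have : z ∈ r.1 ∪ r.2 := hr.1 ▸ Set.mem_univ z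
        rcases this with h | h
        · exact absurd h hz
        · exact h
  refine Set.Finite.of_finite_image (f := fun t : GSep V => {C | IsCompOf G T C ∧ C ⊆ t.1})
    (hcomps.finite_subsets.subset ?_) ?_
  · rintro _ ⟨t, -, rfl⟩
    exact fun C hC => hC.1
  · rintro t ⟨ht, hTt⟩ t' ⟨ht', hTt'⟩ he
    have he' : {C | IsCompOf G T C ∧ C ⊆ t.1} = {C | IsCompOf G T C ∧ C ⊆ t'.1} := he
    have h1 : t.1 = t'.1 := by
      rw [key t ht hTt, key t' ht' hTt', he']
    have h2 : t.2 = t'.2 := by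
      rw [key2 t ht hTt, key2 t' ht' hTt', h1]
    exact Prod.ext h1 h2

/-! ### Finitely many tight cuts through a given vertex -/

/-- A tight cut: a vertex set which is the exact neighbourhood of two distinct
components of its complement. -/
def TightCut (G : SimpleGraph V) (T : Set V) : Prop :=
  ∃ C D, IsCompOf G T C ∧ IsCompOf G T D ∧ C ≠ D ∧ nbhd G C = T ∧ nbhd G D = T

open Classical in
/-- A fixed choice of walk between two vertices, as a vertex set. -/
noncomputable def walkSet (G : SimpleGraph V) (c d : V) : Set V :=
  if h : G.Reachable c d then {x | x ∈ (Classical.choice h).support} else ∅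

lemma walkSet_finite : (walkSet G c d).Finite := by
  classical
  rw [walkSet]
  split
  · exact List.finite_toSet _
  · exact Set.finite_empty

lemma walkSet_spec (h : G.Reachable c d) :
    ∃ w : G.Walk c d, ∀ x ∈ w.support, x ∈ walkSet G c d :=
  ⟨Classical.choice h, fun x hx => by classical rw [walkSet, dif_pos h]; exact hx⟩

/-- `G` with all edges at `v` removed. -/
def delV (G : SimpleGraph V) (v : V) : SimpleGraph V where
  Adj x y := G.Adj x y ∧ x ≠ v ∧ y ≠ v
  symm := ⟨fun a b ⟨h, h1, h2⟩ => ⟨h.symm, h2, h1⟩⟩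
  loopless := ⟨fun a h => G.loopless.irrefl a h.1⟩

lemma reachIn_delV (hvC : v ∉ C) :
    ∀ {a b : V} (w : G.Walk a b), (∀ x ∈ w.support, x ∈ C) → ReachIn (delV G v) C a b := by
  intro a b w
  induction w with
  | nil => exact fun hw => ReachIn.refl (hw _ (by simp))
  | @cons u p q hadj w ih =>
    intro hw
    have hu : u ∈ C := hw _ (by simp [Walk.support_cons])
    have hp : p ∈ C := hw _ (by simp [Walk.support_cons, Walk.start_mem_support])
    refine ReachIn.head_extend (G := delV G v)
      ⟨hadj, fun h => hvC (h ▸ hu), fun h => hvC (h ▸ hp)⟩ hu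
      (ih (fun z hz => hw z (by simp only [Walk.support_cons, List.mem_cons]; right; exact hz)))

lemma isCompOf_delV (hv : v ∈ T) (h : IsCompOf G T C) : IsCompOf (delV G v) (T \ {v}) C := by
  have hvC : v ∉ C := fun hvC => (h.2.1 hvC) hv
  refine ⟨h.1, fun x hx hxT => (h.2.1 hx) hxT.1, ?_, ?_⟩
  · apply induce_connected_of_reachIn h.1
    intro a ha b hb
    obtain ⟨w, hw⟩ := h.reachIn ha hb
    exact reachIn_delV hvC w hw
  · rintro x hx z hz hzT ⟨hadj, -, hzv⟩
    exact h.2.2.2 x hx z hz (fun hzT' => hzT ⟨hzT', hzv⟩) hadj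

lemma nbhd_delV (hvC : v ∉ C) : nbhd (delV G v) C = nbhd G C \ {v} := by
  ext w
  constructor
  · rintro ⟨hwC, c, hc, hadj, hwv, -⟩
    exact ⟨⟨hwC, c, hc, hadj⟩, hwv⟩
  · rintro ⟨⟨hwC, c, hc, hadj⟩, hwv⟩
    exact ⟨hwC, c, hc, hadj, hwv, fun h => hvC (h ▸ hc)⟩

lemma tightCut_finite :
    ∀ (k : ℕ) {V : Type*} (G : SimpleGraph V), (∀ v : V, (G.neighborSet v).Finite) →
      ∀ v : V, {T : Set V | v ∈ T ∧ T.Finite ∧ T.ncard ≤ k ∧ TightCut G T}.Finite := by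
  intro k
  induction k with
  | zero =>
    intro V G hlf v
    convert Set.finite_empty
    ext T
    simp only [Set.mem_setOf_eq, Set.mem_empty_iff_false, iff_false, not_and]
    intro hv hfin hcard
    rw [Nat.le_zero, Set.ncard_eq_zero hfin] at hcard
    exact absurd (hcard ▸ hv) (Set.notMem_empty v)
  | succ k ih =>
    intro V G hlf v
    classical
    set H := delV G v with hH
    have hlfH : ∀ x, (H.neighborSet x).Finite := fun x => (hlf x).subset (fun y hy => hy.1)
    set X := ⋃ c ∈ G.neighborSet v, ⋃ d ∈ G.neighborSet v, walkSet H c d with hX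
    have hXfin : X.Finite :=
      (hlf v).biUnion fun c _ => (hlf v).biUnion fun d _ => walkSet_finite
    have hbig : ({(∅ : Set V)} ∪
        ⋃ x ∈ X, {T | x ∈ T ∧ T.Finite ∧ T.ncard ≤ k ∧ TightCut H T}).Finite :=
      (Set.finite_singleton _).union (hXfin.biUnion fun x _ => ih H hlfH x)
    refine Set.Finite.of_finite_image (f := fun T => T \ {v}) (hbig.subset ?_) ?_
    · rintro _ ⟨T, ⟨hvT, hfin, hcard, C, D, hC, hD, hCD, hNC, hND⟩, rfl⟩
      rcases eq_or_ne (T \ {v}) (∅ : Set V) with he | hne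
      · exact Or.inl he
      right
      have hC' := isCompOf_delV hvT hC
      have hD' := isCompOf_delV hvT hD
      have hvC : v ∉ C := fun h => (hC.2.1 h) hvT
      have hvD : v ∉ D := fun h => (hD.2.1 h) hvT
      have hNC' : nbhd H C = T \ {v} := by rw [hH, nbhd_delV hvC, hNC]
      have hND' : nbhd H D = T \ {v} := by rw [hH, nbhd_delV hvD, hND]
      obtain ⟨c, hcC, hadjc⟩ : ∃ c ∈ C, G.Adj v c := by
        have h : v ∈ nbhd G C := by rw [hNC]; exact hvT
        exact h.2
      obtain ⟨dd, hdD, hadjd⟩ : ∃ dd ∈ D, G.Adj v dd := by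
        have h : v ∈ nbhd G D := by rw [hND]; exact hvT
        exact h.2
      obtain ⟨u, huT'⟩ := Set.nonempty_iff_ne_empty.2 hne
      have huC : u ∈ nbhd H C := by rw [hNC']; exact huT'
      have huD : u ∈ nbhd H D := by rw [hND']; exact huT'
      obtain ⟨c', hc'C, hadjc'⟩ := huC.2
      obtain ⟨d', hd'D, hadjd'⟩ := huD.2
      have hreach : H.Reachable c dd :=
        ((hC'.reachIn hcC hc'C).reachable.trans hadjc'.symm.reachable).trans
          (hadjd'.reachable.trans (hD'.reachIn hd'D hdD).reachable)
      obtain ⟨w, hwsupp⟩ := walkSet_spec hreach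
      have hddC : dd ∉ C := by
        intro h
        exact hCD (hC'.eq_of_mem hD' h hdD)
      obtain ⟨p, hpC, q, hqC, hadjpq, hps, hqs⟩ := walk_exit w hcC hddC
      have hqT' : q ∈ T \ {v} := by
        by_contra hq
        exact hC'.2.2.2 p hpC q hqC hq hadjpq
      have hqX : q ∈ X := by
        rw [hX]
        exact Set.mem_biUnion hadjc (Set.mem_biUnion hadjd (hwsupp q hqs))
      refine Set.mem_biUnion hqX ⟨hqT', hfin.diff, ?_, C, D, hC', hD', hCD, hNC', hND'⟩
      show (T \ {v}).ncard ≤ k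
      have h1 : (T \ {v}).ncard = T.ncard - 1 := Set.ncard_diff_singleton_of_mem hvT
      have h2 : 0 < T.ncard := (Set.ncard_pos hfin).2 ⟨v, hvT⟩
      omega
    · rintro T ⟨hvT, -⟩ T' ⟨hvT', -⟩ he
      have he' : T \ {v} = T' \ {v} := he
      have h1 : T \ {v} ∪ {v} = T := by
        rw [Set.diff_union_self, Set.union_eq_self_of_subset_right (Set.singleton_subset_iff.2 hvT)]
      have h2 : T' \ {v} ∪ {v} = T' := by
        rw [Set.diff_union_self, Set.union_eq_self_of_subset_right (Set.singleton_subset_iff.2 hvT')]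
      rw [← h1, ← h2, he']

/-! ### The nesting lemma -/

lemma nested_side_aux (hconn : G.Connected) {A B C D CB : Set V}
    (hsAB : IsSep G (A, B)) (htCD : IsSep G (C, D))
    (hCB : IsCompOf G (A ∩ B) CB) (hCBsub : CB ⊆ B \ A) (hNB : nbhd G CB = A ∩ B)
    (hT : C ∩ D ⊆ A \ B) (hside : CB ⊆ C \ D) : B ⊆ C ∧ D ⊆ A := by
  rcases (A ∩ B).eq_empty_or_nonempty with hSe | hSne
  · -- degenerate case: empty separator
    have hCBu : CB = Set.univ := eq_univ_of_no_boundary hconn hCB.1 (fun x hx y hadj => by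
      by_contra hy
      have : y ∈ nbhd G CB := ⟨hy, x, hx, hadj.symm⟩
      rw [hNB, hSe] at this
      exact this)
    have hCDu : ∀ z, z ∈ C \ D := fun z => hside (hCBu ▸ Set.mem_univ z)
    exact ⟨fun b _ => (hCDu b).1, fun e he => absurd he (hCDu e).2⟩
  have hSsub : A ∩ B ⊆ C \ D := by
    intro x hx
    have hxn : x ∈ nbhd G CB := by rw [hNB]; exact hx
    obtain ⟨hxCB, c, hc, hadj⟩ := hxn
    have hxT : x ∉ C ∩ D := fun h => (hT h).2 hx.2
    rcases mem_side htCD hxT with h | h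
    · exact h
    · exact absurd hadj.symm (htCD.2 c (hside hc) x h)
  have hKside : ∀ K, IsCompOf G (A ∩ B) K → K ⊆ B \ A → K ⊆ C \ D := by
    intro K hK hKBA
    have hKT : ∀ z ∈ K, z ∉ C ∩ D := fun z hz h => (hKBA hz).2 (hT h).1
    rcases side_of_connected htCD (fun a ha b hb => hK.reachIn ha hb) hKT with h | h
    · exact h
    · exfalso
      obtain ⟨xk, hxk, y, hyS, hadj⟩ := hK.exists_adj_sep hconn hSne
      exact htCD.2 y (hSsub hyS) xk (h hxk) hadj.symm
  constructor
  · intro b hb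
    by_cases hbA : b ∈ A
    · exact (hSsub ⟨hbA, hb⟩).1
    · obtain ⟨K, hK, hbK⟩ := exists_isCompOf G (S := A ∩ B) (v := b) (fun h => hbA h.1)
      have hside2 : K ⊆ A \ B ∨ K ⊆ B \ A :=
        side_of_connected hsAB (fun a ha b' hb' => hK.reachIn ha hb') (fun z hz => hK.2.1 hz)
      rcases hside2 with h | h
      · exact absurd (h hbK).1 hbA
      · exact (hKside K hK h hbK).1
  · intro e he
    by_cases heC : e ∈ C
    · exact (hT ⟨heC, he⟩).1
    · have heS : e ∉ A ∩ B := fun h => heC (hSsub h).1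
      obtain ⟨K, hK, heK⟩ := exists_isCompOf G heS
      have hside2 : K ⊆ A \ B ∨ K ⊆ B \ A :=
        side_of_connected hsAB (fun a ha b' hb' => hK.reachIn ha hb') (fun z hz => hK.2.1 hz)
      rcases hside2 with h | h
      · exact (h heK).1
      · exact absurd ((hKside K hK h) heK).1 heC

end Aux

/-- In a locally finite connected graph, every tight finite-order separation is
crossed by only finitely many tight separations of order at most `k`. -/
theorem stmt_12 {V : Type*} (G : SimpleGraph V)
    (hlf : ∀ v : V, (G.neighborSet v).Finite) (hconn : G.Connected) (k : ℕ)
    (s : GSep V) (hs : TightSep G s) (hfin : (s.1 ∩ s.2).Finite) :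
    {t : GSep V | TightSep G t ∧ (t.1 ∩ t.2).Finite ∧ (t.1 ∩ t.2).ncard ≤ k ∧
      Crosses s t}.Finite := by
  classical
  obtain ⟨hsepS, CA, CB, hCA, hCB, hCAsub, hCBsub, hNA, hNB⟩ := hs
  -- the separator of `s` is nonempty
  have hSne : (s.1 ∩ s.2).Nonempty := by
    rcases (s.1 ∩ s.2).eq_empty_or_nonempty with he | h
    · exfalso
      have hCAu : CA = Set.univ := eq_univ_of_no_boundary hconn hCA.1 (fun x hx y hadj => by
        by_contra hy
        have hmem : y ∈ nbhd G CA := ⟨hy, x, hx, hadj.symm⟩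
        rw [hNA, he] at hmem
        exact hmem)
      obtain ⟨b, hb⟩ := hCB.1
      exact (hCBsub hb).2 (hCAsub (hCAu ▸ Set.mem_univ b)).1
    · exact h
  -- the finite "core" set
  set Y : Set V := (s.1 ∩ s.2) ∪
      ⋃ x ∈ s.1 ∩ s.2, ⋃ y ∈ s.1 ∩ s.2, walkSet G x y with hY
  have hYfin : Y.Finite :=
    hfin.union (hfin.biUnion fun _ _ => hfin.biUnion fun _ _ => walkSet_finite)
  -- the family of possible separators
  have hTfam : {T : Set V | T.Finite ∧ T.ncard ≤ k ∧ TightCut G T ∧ (T ∩ Y).Nonempty}.Finite := by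
    refine (hYfin.biUnion (fun y _ => tightCut_finite k G hlf y)).subset ?_
    rintro T ⟨h1, h2, h3, x, hxT, hxY⟩
    exact Set.mem_biUnion hxY ⟨hxT, h1, h2, h3⟩
  refine (hTfam.biUnion (fun T hT => slice_finite hlf hconn hT.1)).subset ?_
  rintro t ⟨⟨hsept, CC, CD, hCC, hCD, hCCsub, hCDsub, hNC, hND⟩, htfin, htcard, hcross⟩
  have hCCD : CC ≠ CD := by
    intro h
    obtain ⟨x0, hx0⟩ := hCC.1
    exact (hCCsub hx0).2 (hCDsub (h ▸ hx0)).1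
  refine Set.mem_biUnion (⟨htfin, htcard, ⟨CC, CD, hCC, hCD, hCCD, hNC, hND⟩, ?_⟩ :
      (t.1 ∩ t.2) ∈ {T : Set V | T.Finite ∧ T.ncard ≤ k ∧ TightCut G T ∧ (T ∩ Y).Nonempty})
    (⟨hsept, rfl⟩ : t ∈ {r : GSep V | IsSep G r ∧ r.1 ∩ r.2 = t.1 ∩ t.2})
  -- it remains to show the separator of `t` meets `Y`
  by_contra hTY
  have hTY' : ∀ x ∈ t.1 ∩ t.2, x ∉ Y := fun x h1 h2 => hTY ⟨x, h1, h2⟩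
  have hTnotS : ∀ x ∈ t.1 ∩ t.2, x ∉ s.1 ∩ s.2 := fun x hx hxS =>
    hTY' x hx (Set.mem_union_left _ hxS)
  -- the separator of `t` is nonempty
  rcases (t.1 ∩ t.2).eq_empty_or_nonempty with hTe | hTne
  · have hCCu : CC = Set.univ := eq_univ_of_no_boundary hconn hCC.1 (fun x hx y hadj => by
      by_contra hy
      exact hCC.2.2.2 x hx y hy (fun h => (Set.notMem_empty y) (hTe ▸ h)) hadj)
    obtain ⟨x0, hx0⟩ := hCD.1
    exact (hCDsub hx0).2 (hCCsub (hCCu ▸ Set.mem_univ x0)).1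
  by_cases h1 : ∃ u ∈ t.1 ∩ t.2, u ∈ s.1 \ s.2 <;>
    by_cases h2 : ∃ u ∈ t.1 ∩ t.2, u ∈ s.2 \ s.1
  · -- the separator of `t` meets both strict sides of `s`
    obtain ⟨t1, ht1T, ht1s⟩ := h1
    obtain ⟨t2, ht2T, ht2s⟩ := h2
    have hcompS : ∀ CX : Set V, IsCompOf G (t.1 ∩ t.2) CX → nbhd G CX = t.1 ∩ t.2 →
        (CX ∩ (s.1 ∩ s.2)).Nonempty := by
      intro CX hCX hNX
      obtain ⟨ht1n, c1, hc1, hadj1⟩ : t1 ∈ nbhd G CX := by rw [hNX]; exact ht1T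
      obtain ⟨ht2n, c2, hc2, hadj2⟩ : t2 ∈ nbhd G CX := by rw [hNX]; exact ht2T
      have hr : ReachIn G (insert t1 (insert t2 CX)) t1 t2 :=
        ReachIn.head_extend hadj1 (Set.mem_insert _ _)
          (((hCX.reachIn hc1 hc2).mono (fun z hz => by simp [hz])).extend hadj2.symm
            (by simp))
      obtain ⟨w, hw⟩ := hr
      obtain ⟨y, hys, hyS⟩ := walk_cross hsepS.1 hsepS.2 w ht1s ht2s
      have hyW := hw y hys
      simp only [Set.mem_insert_iff] at hyW
      rcases hyW with rfl | rfl | hyCX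
      · exact absurd hyS (hTnotS y ht1T)
      · exact absurd hyS (hTnotS y ht2T)
      · exact ⟨y, hyCX, hyS⟩
    obtain ⟨x, hxCC, hxS⟩ := hcompS CC hCC hNC
    obtain ⟨y, hyCD, hyS⟩ := hcompS CD hCD hND
    have hyCC : y ∉ CC := fun h => hCCD (hCC.eq_of_mem hCD h hyCD)
    obtain ⟨w, hwY⟩ := walkSet_spec (hconn.preconnected x y)
    obtain ⟨p, hpCC, q, hqCC, hadjpq, hps, hqs⟩ := walk_exit w hxCC hyCC
    have hqT : q ∈ t.1 ∩ t.2 := by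
      by_contra hq
      exact hCC.2.2.2 p hpCC q hqCC hq hadjpq
    refine hTY' q hqT (Set.mem_union_right _ ?_)
    exact Set.mem_biUnion hxS (Set.mem_biUnion hyS (hwY q hqs))
  · -- `t`'s separator lies in `s.1 \ s.2`
    have hTsub : t.1 ∩ t.2 ⊆ s.1 \ s.2 := fun u hu =>
      (mem_side hsepS (hTnotS u hu)).resolve_right (fun h => h2 ⟨u, hu, h⟩)
    have hCBdisj : ∀ x ∈ CB, x ∉ t.1 ∩ t.2 := fun x hx hxT =>
      (hTsub hxT).2 (hCBsub hx).1
    rcases side_of_connected hsept (fun a ha b hb => hCB.reachIn ha hb) hCBdisj with hsd | hsd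
    · obtain ⟨hBC, hDA⟩ := nested_side_aux hconn hsepS hsept hCB hCBsub hNB hTsub hsd
      exact hcross (Or.inr (Or.inr (Or.inl ⟨hBC, hDA⟩)))
    · obtain ⟨hBC, hDA⟩ := nested_side_aux hconn hsepS (isSep_swap hsept) hCB hCBsub hNB
        (by rw [Set.inter_comm] at hTsub; exact hTsub) hsd
      exact hcross (Or.inr (Or.inr (Or.inr ⟨hBC, hDA⟩)))
  · -- `t`'s separator lies in `s.2 \ s.1`
    have hTsub : t.1 ∩ t.2 ⊆ s.2 \ s.1 := fun u hu =>
      (mem_side hsepS (hTnotS u hu)).resolve_left (fun h => h1 ⟨u, hu, h⟩)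
    have hCA' : IsCompOf G (s.2 ∩ s.1) CA := by rwa [Set.inter_comm]
    have hNA' : nbhd G CA = s.2 ∩ s.1 := by rwa [Set.inter_comm]
    have hsepS' : IsSep G (s.2, s.1) := isSep_swap hsepS
    have hCAdisj : ∀ x ∈ CA, x ∉ t.1 ∩ t.2 := fun x hx hxT =>
      (hTsub hxT).2 (hCAsub hx).1
    rcases side_of_connected hsept (fun a ha b hb => hCA.reachIn ha hb) hCAdisj with hsd | hsd
    · obtain ⟨hBC, hDA⟩ := nested_side_aux hconn hsepS' hsept hCA' hCAsub hNA' hTsub hsd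
      exact hcross (Or.inl ⟨hBC, hDA⟩)
    · obtain ⟨hBC, hDA⟩ := nested_side_aux hconn hsepS' (isSep_swap hsept) hCA' hCAsub hNA'
        (by rw [Set.inter_comm] at hTsub; exact hTsub) hsd
      exact hcross (Or.inr (Or.inl ⟨hBC, hDA⟩))
  · -- impossible: the separator of `t` is nonempty but avoids both sides
    obtain ⟨u, hu⟩ := hTne
    rcases mem_side hsepS (hTnotS u hu) with h | h
    · exact h1 ⟨u, hu, h⟩
    · exact h2 ⟨u, hu, h⟩
end

section
/- Let (S, ∼, ⊞, |·|) be a finite submodular uncrossing-setting, and define the crossing number x(s) of s ∈ S to be the number of separations in entanglements crossed by s. If r, s ∈ S lie in entanglements and cross, and c, d are two opposite corners of r, s that both lie in S, then x(c) + x(d) < x(r) + x(s). -/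
open Set

/-- Two ordered pairs represent the same unordered separation. -/
def uEq {α : Type*} (p q : α × α) : Prop := p = q ∨ p = Prod.swap q

/-- A submodular uncrossing-setting on a set `S` of separations.  Separations
are represented as ordered pairs `(A, B)` with `A ≠ B` standing for `{A, B}`;
`S` is closed under swapping sides.  `Cross` is an anti-reflexive symmetric
crossing relation (well-defined on unordered pairs); non-crossing separations
are nested.  `corner r s` is the corner `L(r.1, s.1)`, so the four corners of
crossing `r, s` are obtained by swapping sides, with `corner r s` and
`corner r.swap s.swap` opposite (likewise for the other pair); the four corners
are pairwise distinct separations, not necessarily in `S`.  The order function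
is submodular on opposite corners, and the conditions (F1)–(F3) hold for
opposite `S`-corners. -/
structure SubmodUncrossing (α : Type*) where
  S : Set (α × α)
  ne_sides : ∀ s ∈ S, s.1 ≠ s.2
  swap_mem : ∀ s ∈ S, Prod.swap s ∈ S
  Cross : α × α → α × α → Prop
  cross_irrefl : ∀ s, ¬ Cross s s
  cross_symm : ∀ r s, Cross r s → Cross s r
  cross_swap_left : ∀ r s, Cross (Prod.swap r) s ↔ Cross r s
  cross_swap_right : ∀ r s, Cross r (Prod.swap s) ↔ Cross r s
  corner : α × α → α × α → α × α
  corner_ne : ∀ r s, r ∈ S → s ∈ S → Cross r s → (corner r s).1 ≠ (corner r s).2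
  corner_distinct : ∀ r s, r ∈ S → s ∈ S → Cross r s →
    List.Pairwise (fun p q => ¬ uEq p q)
      [corner r s, corner r (Prod.swap s), corner (Prod.swap r) s,
        corner (Prod.swap r) (Prod.swap s)]
  ord : α × α → ℝ
  ord_nonneg : ∀ s, 0 ≤ ord s
  ord_swap : ∀ s, ord (Prod.swap s) = ord s
  submod : ∀ r s, r ∈ S → s ∈ S → Cross r s →
    ord (corner r s) + ord (corner (Prod.swap r) (Prod.swap s)) ≤ ord r + ord s
  F1 : ∀ r s t, r ∈ S → s ∈ S → t ∈ S → Cross r s →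
    corner r s ∈ S → corner (Prod.swap r) (Prod.swap s) ∈ S →
    (Cross t (corner r s) ∨ Cross t (corner (Prod.swap r) (Prod.swap s))) →
    Cross t r ∨ Cross t s
  F2 : ∀ r s t, r ∈ S → s ∈ S → t ∈ S → Cross r s →
    corner r s ∈ S → corner (Prod.swap r) (Prod.swap s) ∈ S →
    Cross t (corner r s) → Cross t (corner (Prod.swap r) (Prod.swap s)) →
    Cross t r ∧ Cross t s
  F3 : ∀ r s, r ∈ S → s ∈ S → Cross r s →
    corner r s ∈ S → corner (Prod.swap r) (Prod.swap s) ∈ S →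
    ¬ Cross r (corner r s) ∧ ¬ Cross r (corner (Prod.swap r) (Prod.swap s)) ∧
    ¬ Cross s (corner r s) ∧ ¬ Cross s (corner (Prod.swap r) (Prod.swap s))

variable {α : Type*}

/-- An entanglement in a submodular uncrossing-setting: a nonempty subset of
`S` (closed under swapping sides) such that whenever `r ∈ ε` is crossed by
`s ∈ S` so that the two adjacent corners on the same side of `r` have order at
most `|r|`, at least one of them has order exactly `|r|` and lies in `ε`. -/
def SubmodUncrossing.IsEnt (U : SubmodUncrossing α) (ε : Set (α × α)) : Prop :=
  ε.Nonempty ∧ ε ⊆ U.S ∧ (∀ s ∈ ε, Prod.swap s ∈ ε) ∧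
  ∀ r ∈ ε, ∀ s ∈ U.S, U.Cross r s →
    U.ord (U.corner r s) ≤ U.ord r → U.ord (U.corner r (Prod.swap s)) ≤ U.ord r →
    (U.ord (U.corner r s) = U.ord r ∧ U.corner r s ∈ ε) ∨
    (U.ord (U.corner r (Prod.swap s)) = U.ord r ∧ U.corner r (Prod.swap s) ∈ ε)

/-- The separations lying in entanglements. -/
def SubmodUncrossing.entSeps (U : SubmodUncrossing α) : Set (α × α) :=
  {t | ∃ ε, U.IsEnt ε ∧ t ∈ ε}

/-- The crossing number of `s`: the number of separations in entanglements
crossed by `s`. -/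
noncomputable def SubmodUncrossing.x (U : SubmodUncrossing α) (s : α × α) : ℕ :=
  {t ∈ U.entSeps | U.Cross s t}.ncard

/-- A separation is friendly if it lies in an entanglement `ε` and no other
separation in `ε` crosses fewer separations lying in entanglements. -/
def SubmodUncrossing.FriendlySep (U : SubmodUncrossing α) (s : α × α) : Prop :=
  ∃ ε, U.IsEnt ε ∧ s ∈ ε ∧ ∀ t ∈ ε, U.x s ≤ U.x t


/-- In a finite submodular uncrossing-setting, if `r, s` lie in entanglements
and cross, and `c, d` are two opposite corners of `r, s` which both lie in `S`,
then `x(c) + x(d) < x(r) + x(s)`. -/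
theorem stmt_13 {α : Type*} (U : SubmodUncrossing α) (hfin : U.S.Finite)
    (r s : α × α) (hr : r ∈ U.entSeps) (hs : s ∈ U.entSeps)
    (hcross : U.Cross r s)
    (hc : U.corner r s ∈ U.S)
    (hd : U.corner (Prod.swap r) (Prod.swap s) ∈ U.S) :
    U.x (U.corner r s) + U.x (U.corner (Prod.swap r) (Prod.swap s)) <
      U.x r + U.x s := by
  classical
  have hsub : U.entSeps ⊆ U.S := by
    rintro t ⟨ε, ⟨-, hεS, -, -⟩, ht⟩
    exact hεS ht
  have hE : U.entSeps.Finite := hfin.subset hsub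
  set T := hE.toFinset with hT
  have hmemT : ∀ t, t ∈ T ↔ t ∈ U.entSeps := fun t => hE.mem_toFinset
  have hx : ∀ p, U.x p = ∑ t ∈ T, (if U.Cross p t then 1 else 0) := by
    intro p
    have heq : {t ∈ U.entSeps | U.Cross p t} = ↑(T.filter (fun t => U.Cross p t)) := by
      ext t; simp [hmemT]
    rw [SubmodUncrossing.x, heq, Set.ncard_coe_finset, Finset.card_filter]
  have hrS : r ∈ U.S := hsub hr
  have hsS : s ∈ U.S := hsub hs
  rw [hx, hx, hx, hx, ← Finset.sum_add_distrib, ← Finset.sum_add_distrib]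
  apply Finset.sum_lt_sum
  · intro t htT
    have htS : t ∈ U.S := hsub ((hmemT t).1 htT)
    by_cases h1 : U.Cross (U.corner r s) t
    · by_cases h2 : U.Cross (U.corner (Prod.swap r) (Prod.swap s)) t
      · have h := U.F2 r s t hrS hsS htS hcross hc hd
          (U.cross_symm _ _ h1) (U.cross_symm _ _ h2)
        simp [h1, h2, U.cross_symm _ _ h.1, U.cross_symm _ _ h.2]
      · have h := U.F1 r s t hrS hsS htS hcross hc hd (Or.inl (U.cross_symm _ _ h1))
        rcases h with h | h <;>
          · have h' := U.cross_symm _ _ h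
            simp only [h1, h2, if_true, if_false, h', if_pos, if_neg, not_false_iff]
            split_ifs <;> omega
    · by_cases h2 : U.Cross (U.corner (Prod.swap r) (Prod.swap s)) t
      · have h := U.F1 r s t hrS hsS htS hcross hc hd (Or.inr (U.cross_symm _ _ h2))
        rcases h with h | h <;>
          · have h' := U.cross_symm _ _ h
            simp only [h1, h2, if_true, if_false, h', if_pos, if_neg, not_false_iff]
            split_ifs <;> omega
      · simp [h1, h2]
  · refine ⟨s, (hmemT s).2 hs, ?_⟩
    have hF3 := U.F3 r s hrS hsS hcross hc hd
    have hc1 : ¬ U.Cross (U.corner r s) s := fun h => hF3.2.2.1 (U.cross_symm _ _ h)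
    have hc2 : ¬ U.Cross (U.corner (Prod.swap r) (Prod.swap s)) s :=
      fun h => hF3.2.2.2 (U.cross_symm _ _ h)
    have hss : ¬ U.Cross s s := U.cross_irrefl s
    simp [hc1, hc2, hcross, hss]
end
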